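/- arXiv:1006.1087 — 10 statements merged into one kernel-verified Lean document; each statement's English description precedes it below -/
import Mathlib

section
/- If G is a well-covered graph (no isolated vertices and all maximal independent sets have the same cardinality) on n vertices, then 2·height(I(G)) ≥ |V(G)|, i.e., every maximal independent set has cardinality at most |V(G)|/2, equivalently every minimal vertex cover has cardinality at least |V(G)|/2. -/
open Relation

/-- `C` is a vertex cover of `G`. -/
def IsVC {V : Type*} (G : SimpleGraph V) (C : Set V) : Prop :=
  ∀ ⦃u v : V⦄, G.Adj u v → u ∈ C ∨ v ∈ C

/-- `C` is a minimal vertex cover of `G`. -/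
def IsMinVC {V : Type*} (G : SimpleGraph V) (C : Set V) : Prop :=
  IsVC G C ∧ ∀ D : Set V, IsVC G D → D ⊆ C → D = C

/-- `S` is an independent set of `G`. -/
def IsIndep {V : Type*} (G : SimpleGraph V) (S : Set V) : Prop :=
  ∀ u ∈ S, ∀ v ∈ S, ¬ G.Adj u v

/-- `S` is a maximal independent set of `G`. -/
def IsMaxIndep {V : Type*} (G : SimpleGraph V) (S : Set V) : Prop :=
  IsIndep G S ∧ ∀ T : Set V, IsIndep G T → S ⊆ T → T = S

/-- `G` has no isolated vertices. -/
def NoIsolated {V : Type*} (G : SimpleGraph V) : Prop := ∀ v, ∃ w, G.Adj v w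

/-- The vertex set `{x_1,...,x_n} ∪ {y_1,...,y_n}`: `xv i = Sum.inl i`, `yv i = Sum.inr i`. -/
abbrev Vtx (n : ℕ) := Fin n ⊕ Fin n

def xv {n : ℕ} (i : Fin n) : Vtx n := Sum.inl i
def yv {n : ℕ} (i : Fin n) : Vtx n := Sum.inr i

/-- Condition (∗): X is a minimal vertex cover, Y is a maximal independent set,
and `x_i y_i` is an edge for every `i`. -/
def StarCond {n : ℕ} (G : SimpleGraph (Vtx n)) : Prop :=
  IsMinVC G (Set.range xv) ∧ IsMaxIndep G (Set.range yv) ∧ ∀ i, G.Adj (xv i) (yv i)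

/-- Condition (∗∗): `x_i y_j ∈ E(G)` implies `i ≤ j`. -/
def StarStarCond {n : ℕ} (G : SimpleGraph (Vtx n)) : Prop :=
  ∀ i j : Fin n, G.Adj (xv i) (yv j) → i ≤ j

/-- Condition (i): for distinct `i,j,k` and `z_i ∈ {x_i,y_i}`, if `z_i x_j` and `y_j x_k`
are edges then so is `z_i x_k`. -/
def CondI {n : ℕ} (G : SimpleGraph (Vtx n)) : Prop :=
  ∀ i j k : Fin n, i ≠ j → j ≠ k → i ≠ k →
    ∀ z ∈ ({xv i, yv i} : Set (Vtx n)),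
      G.Adj z (xv j) → G.Adj (yv j) (xv k) → G.Adj z (xv k)

/-- Condition (ii): `x_i y_j ∈ E(G)` implies `x_i x_j ∉ E(G)`. -/
def CondII {n : ℕ} (G : SimpleGraph (Vtx n)) : Prop :=
  ∀ i j : Fin n, G.Adj (xv i) (yv j) → ¬ G.Adj (xv i) (xv j)

/-- The minimum vertex cover size of `G` (the height of the edge ideal) is at least `n`. -/
def HeightN {n : ℕ} (G : SimpleGraph (Vtx n)) : Prop :=
  ∀ C : Finset (Vtx n), IsVC G ↑C → n ≤ C.card

/-- Directed edge `i → j` of the semidirected graph `𝔡_G`. -/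
def dirEdge {n : ℕ} (G : SimpleGraph (Vtx n)) (i j : Fin n) : Prop :=
  i ≠ j ∧ G.Adj (xv i) (yv j)

/-- Undirected edge `ij` of the semidirected graph `𝔡_G`. -/
def undirEdge {n : ℕ} (G : SimpleGraph (Vtx n)) (i j : Fin n) : Prop :=
  G.Adj (xv i) (xv j)

/-! ### Auxiliary development for Statement 0 -/

section WCAux

open Finset

variable {V : Type*} [Fintype V] [DecidableEq V] (G : SimpleGraph V)

open Classical in
/-- The set of neighbors of a finset of vertices. -/
noncomputable def nbrF (A : Finset V) : Finset V :=
  Finset.univ.filter fun v => ∃ a ∈ A, G.Adj a v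

/-- The closed neighborhood of a finset of vertices. -/
noncomputable def clF (A : Finset V) : Finset V := A ∪ nbrF G A

/-- Independence for finsets. -/
def FIndep (A : Finset V) : Prop := ∀ u ∈ A, ∀ v ∈ A, ¬ G.Adj u v

/-- Maximal independence for finsets. -/
def FMax (A : Finset V) : Prop := FIndep G A ∧ ∀ B, FIndep G B → A ⊆ B → B = A

variable {G}

lemma mem_nbrF {A : Finset V} {v : V} : v ∈ nbrF G A ↔ ∃ a ∈ A, G.Adj a v := by
  classical
  unfold nbrF
  rw [Finset.mem_filter]
  simp

lemma mem_nbrF_singleton {w v : V} : v ∈ nbrF G {w} ↔ G.Adj w v := by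
  rw [mem_nbrF]; simp

lemma nbrF_mono {A B : Finset V} (h : A ⊆ B) : nbrF G A ⊆ nbrF G B := by
  intro x hx
  obtain ⟨a, ha, hadj⟩ := mem_nbrF.1 hx
  exact mem_nbrF.2 ⟨a, h ha, hadj⟩

lemma clF_mono {A B : Finset V} (h : A ⊆ B) : clF G A ⊆ clF G B :=
  Finset.union_subset_union h (nbrF_mono h)

lemma subset_clF {A : Finset V} : A ⊆ clF G A := Finset.subset_union_left

lemma nbrF_subset_clF {A : Finset V} : nbrF G A ⊆ clF G A := Finset.subset_union_right

lemma findep_subset {A B : Finset V} (h : FIndep G B) (hAB : A ⊆ B) : FIndep G A :=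
  fun u hu v hv => h u (hAB hu) v (hAB hv)

lemma findep_coe {A : Finset V} : IsIndep G ↑A ↔ FIndep G A := by
  constructor
  · intro h u hu v hv; exact h u (by exact_mod_cast hu) v (by exact_mod_cast hv)
  · intro h u hu v hv; exact h u (by exact_mod_cast hu) v (by exact_mod_cast hv)

/-- Every independent finset extends to a maximal independent finset. -/
lemma exists_fmax_ext {A : Finset V} (hA : FIndep G A) : ∃ B, A ⊆ B ∧ FMax G B := by
  classical
  set s : Finset (Finset V) :=
    Finset.univ.powerset.filter (fun B => A ⊆ B ∧ FIndep G B) with hs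
  have hmem : ∀ B : Finset V, B ∈ s ↔ (A ⊆ B ∧ FIndep G B) := by
    intro B
    rw [hs, Finset.mem_filter, Finset.mem_powerset]
    exact ⟨fun h => h.2, fun h => ⟨Finset.subset_univ _, h⟩⟩
  have hne : s.Nonempty := ⟨A, (hmem A).2 ⟨subset_rfl, hA⟩⟩
  obtain ⟨B, hBs, hBmax⟩ := Finset.exists_max_image s Finset.card hne
  obtain ⟨hAB, hBind⟩ := (hmem B).1 hBs
  refine ⟨B, hAB, hBind, ?_⟩
  intro C hC hBC
  have hCs : C ∈ s := (hmem C).2 ⟨hAB.trans hBC, hC⟩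
  exact (Finset.eq_of_subset_of_card_le hBC (hBmax C hCs)).symm

lemma fmax_isMaxIndep {A : Finset V} (h : FMax G A) : IsMaxIndep G ↑A := by
  refine ⟨findep_coe.2 h.1, ?_⟩
  intro T hT hsub
  have hTfin : T.Finite := T.toFinite
  have hsub' : A ⊆ hTfin.toFinset := by
    intro a ha
    rw [Set.Finite.mem_toFinset]
    exact hsub (by exact_mod_cast ha)
  have hTind : FIndep G hTfin.toFinset := by
    intro u hu v hv
    exact hT u (hTfin.mem_toFinset.1 hu) v (hTfin.mem_toFinset.1 hv)
  have heq := h.2 _ hTind hsub'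
  calc T = ↑hTfin.toFinset := hTfin.coe_toFinset.symm
  _ = ↑A := by rw [heq]

lemma isMaxIndep_fmax {A : Finset V} (h : IsMaxIndep G ↑A) : FMax G A := by
  refine ⟨findep_coe.1 h.1, ?_⟩
  intro B hB hAB
  have hcoe := h.2 ↑B (findep_coe.2 hB) (Finset.coe_subset.2 hAB)
  exact_mod_cast hcoe

/-- `T` is a maximal independent set of the graph obtained by deleting the closed
neighborhood of `J`. -/
def RMax (G : SimpleGraph V) (J T : Finset V) : Prop :=
  FMax G (J ∪ T) ∧ Disjoint T (clF G J)

lemma rmax_card {k : ℕ} (hk : ∀ B : Finset V, FMax G B → B.card = k)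
    {J T : Finset V} (h : RMax G J T) : J.card + T.card = k := by
  have hdisj : Disjoint J T := by
    rw [Finset.disjoint_left]
    intro a haJ haT
    exact (Finset.disjoint_left.1 h.2 haT (subset_clF haJ))
  have := hk _ h.1
  rwa [Finset.card_union_of_disjoint hdisj] at this

/-- Relative extension lemma. -/
lemma rext {J I : Finset V} (h1 : FIndep G (J ∪ I)) (h2 : Disjoint I (clF G J)) :
    ∃ T, I ⊆ T ∧ RMax G J T := by
  obtain ⟨M, hJIM, hM⟩ := exists_fmax_ext h1
  have hJM : J ⊆ M := Finset.union_subset_left hJIM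
  have hIM : I ⊆ M := Finset.union_subset_right hJIM
  refine ⟨M \ J, ?_, ?_, ?_⟩
  · intro a ha
    refine Finset.mem_sdiff.2 ⟨hIM ha, fun haJ => ?_⟩
    exact Finset.disjoint_left.1 h2 ha (subset_clF haJ)
  · rwa [Finset.union_sdiff_of_subset hJM]
  · rw [Finset.disjoint_left]
    intro x hx hxcl
    have hxM : x ∈ M := (Finset.mem_sdiff.1 hx).1
    have hxJ : x ∉ J := (Finset.mem_sdiff.1 hx).2
    rcases Finset.mem_union.1 hxcl with hxJ' | hxn
    · exact hxJ hxJ'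
    · obtain ⟨a, haJ, hadj⟩ := mem_nbrF.1 hxn
      exact hM.1 a (hJM haJ) x hxM hadj

/-- **Twin lemma**: in a well-covered graph, an independent family of vertices having the
same nonempty neighborhood `D` relative to the deletion of `N[J]` has size at most `|D|`. -/
lemma twin_lemma {k : ℕ} (hk : ∀ B : Finset V, FMax G B → B.card = k)
    {J W₀ D : Finset V} (hWind : FIndep G (J ∪ W₀)) (hWdisj : Disjoint W₀ (clF G J))
    (hW₀ne : W₀.Nonempty) (hDne : D.Nonempty)
    (hnb : ∀ w ∈ W₀, nbrF G {w} \ clF G J = D) :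
    W₀.card ≤ D.card := by
  classical
  obtain ⟨w₁, hw₁⟩ := hW₀ne
  have hDdisj : Disjoint D (clF G J) := by
    rw [← hnb w₁ hw₁]; exact Finset.sdiff_disjoint
  have hDadj : ∀ w ∈ W₀, ∀ d ∈ D, G.Adj w d := by
    intro w hw d hd
    rw [← hnb w hw] at hd
    exact mem_nbrF_singleton.1 (Finset.mem_sdiff.1 hd).1
  -- T : a maximum independent subset of D; it dominates D
  set s : Finset (Finset V) := D.powerset.filter (fun T => FIndep G T) with hs
  have hmemS : ∀ T : Finset V, T ∈ s ↔ T ⊆ D ∧ FIndep G T := by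
    intro T; rw [hs, Finset.mem_filter, Finset.mem_powerset]
  obtain ⟨d₀, hd₀⟩ := hDne
  have hsingle : ({d₀} : Finset V) ∈ s := by
    refine (hmemS _).2 ⟨Finset.singleton_subset_iff.2 hd₀, ?_⟩
    intro u hu v hv
    rw [Finset.mem_singleton] at hu hv
    subst hu; subst hv
    exact G.irrefl
  obtain ⟨T, hTs, hTmax⟩ := Finset.exists_max_image s Finset.card ⟨_, hsingle⟩
  obtain ⟨hTD, hTind⟩ := (hmemS T).1 hTs
  have hTne : T.Nonempty := by
    rw [← Finset.card_pos]
    have h1 := hTmax _ hsingle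
    rw [Finset.card_singleton] at h1
    omega
  have hTdom : ∀ d ∈ D, d ∉ T → d ∈ nbrF G T := by
    intro d hd hdT
    by_contra hdn
    have hins : insert d T ∈ s := by
      refine (hmemS _).2 ⟨Finset.insert_subset hd hTD, ?_⟩
      intro u hu v hv hadj
      rcases Finset.mem_insert.1 hu with rfl | huT
      · rcases Finset.mem_insert.1 hv with rfl | hvT
        · exact G.irrefl hadj
        · exact hdn (mem_nbrF.2 ⟨v, hvT, hadj.symm⟩)
      · rcases Finset.mem_insert.1 hv with rfl | hvT
        · exact hdn (mem_nbrF.2 ⟨u, huT, hadj⟩)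
        · exact hTind u huT v hvT hadj
    have hcard := hTmax _ hins
    rw [Finset.card_insert_of_notMem hdT] at hcard
    omega
  have hTdisjJ : Disjoint T (clF G J) := Finset.disjoint_of_subset_left hTD hDdisj
  -- S : a relative maximal independent set containing W₀
  obtain ⟨S, hW₀S, hSR⟩ := rext hWind hWdisj
  have hJSind : FIndep G (J ∪ S) := hSR.1.1
  have hSdisj : Disjoint S (clF G J) := hSR.2
  have hSD : Disjoint S D := by
    rw [Finset.disjoint_left]
    intro a haS haD
    exact hJSind w₁ (Finset.mem_union_right _ (hW₀S hw₁)) a (Finset.mem_union_right _ haS)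
      (hDadj w₁ hw₁ a haD)
  -- S' : a relative maximal independent set containing T ∪ (S \ N(T))
  have hIind : FIndep G (J ∪ (T ∪ (S \ nbrF G T))) := by
    intro u hu v hv hadj
    have hmemcase : ∀ x, x ∈ J ∪ (T ∪ (S \ nbrF G T)) →
        (x ∈ J ∪ S ∧ x ∉ T) ∨ x ∈ T := by
      intro x hx
      rcases Finset.mem_union.1 hx with hxJ | hx'
      · left
        refine ⟨Finset.mem_union_left _ hxJ, fun hxT => ?_⟩
        exact Finset.disjoint_left.1 hTdisjJ hxT (subset_clF hxJ)
      · rcases Finset.mem_union.1 hx' with hxT | hxS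
        · right; exact hxT
        · left
          have hxS' := Finset.mem_sdiff.1 hxS
          refine ⟨Finset.mem_union_right _ hxS'.1, fun hxT => ?_⟩
          exact Finset.disjoint_left.1 (Finset.disjoint_of_subset_right hTD hSD) hxS'.1 hxT
    -- key cross fact : no vertex of J ∪ (S \ N(T)) is adjacent to T
    have hcross : ∀ x, x ∈ J ∪ (T ∪ (S \ nbrF G T)) → x ∉ T → ∀ t ∈ T, ¬ G.Adj x t := by
      intro x hx hxT t ht hadj'
      rcases Finset.mem_union.1 hx with hxJ | hx'
      · -- t would be in N(J) ⊆ cl J, contradicting T ∩ cl J = ∅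
        exact Finset.disjoint_left.1 hTdisjJ ht
          (nbrF_subset_clF (mem_nbrF.2 ⟨x, hxJ, hadj'⟩))
      · rcases Finset.mem_union.1 hx' with hxT' | hxS
        · exact hxT hxT'
        · have hxS' := Finset.mem_sdiff.1 hxS
          exact hxS'.2 (mem_nbrF.2 ⟨t, ht, hadj'.symm⟩)
    rcases hmemcase u hu with ⟨huJS, huT⟩ | huT
    · rcases hmemcase v hv with ⟨hvJS, hvT⟩ | hvT
      · exact hJSind u huJS v hvJS hadj
      · exact hcross u hu huT v hvT hadj
    · rcases hmemcase v hv with ⟨hvJS, hvT⟩ | hvT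
      · exact hcross v hv hvT u huT hadj.symm
      · exact hTind u huT v hvT hadj
  have hIdisj : Disjoint (T ∪ (S \ nbrF G T)) (clF G J) :=
    Finset.disjoint_union_left.2
      ⟨hTdisjJ, Finset.disjoint_of_subset_left Finset.sdiff_subset hSdisj⟩
  obtain ⟨S', hsubS', hS'R⟩ := rext hIind hIdisj
  have hJS'ind : FIndep G (J ∪ S') := hS'R.1.1
  have hTS' : T ⊆ S' := Finset.union_subset_left hsubS'
  have hSnTS' : S \ nbrF G T ⊆ S' := Finset.union_subset_right hsubS'
  -- no vertex of S' is a neighbor of T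
  have hS'nbr : ∀ x ∈ S', x ∉ nbrF G T := by
    intro x hxS' hxn
    obtain ⟨t, ht, hadj⟩ := mem_nbrF.1 hxn
    exact hJS'ind t (Finset.mem_union_right _ (hTS' ht)) x (Finset.mem_union_right _ hxS') hadj
  -- cardinalities
  have hcS : J.card + S.card = k := rmax_card hk hSR
  have hcS' : J.card + S'.card = k := rmax_card hk hS'R
  set Y : Finset V := S' \ (T ∪ (S \ nbrF G T)) with hY
  have hYS' : Y ⊆ S' := Finset.sdiff_subset
  have hYD : ∀ y ∈ Y, y ∉ D := by
    intro y hy hyD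
    have hy' := Finset.mem_sdiff.1 hy
    have hyT : y ∉ T := fun h => hy'.2 (Finset.mem_union_left _ h)
    exact hS'nbr y hy'.1 (hTdom y hyD hyT)
  -- partition of S'
  have hpart : T ∪ (S \ nbrF G T) ∪ Y = S' := Finset.union_sdiff_of_subset hsubS'
  have hdTY : Disjoint (T ∪ (S \ nbrF G T)) Y := Finset.disjoint_sdiff
  have hdT_SnT : Disjoint T (S \ nbrF G T) :=
    Finset.disjoint_of_subset_right Finset.sdiff_subset
      (Finset.disjoint_of_subset_left hTD hSD.symm)
  have hcard1 : T.card + (S \ nbrF G T).card + Y.card = S'.card := by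
    rw [← hpart, Finset.card_union_of_disjoint hdTY,
      Finset.card_union_of_disjoint hdT_SnT]
  have hcard2 : (S \ nbrF G T).card + (S ∩ nbrF G T).card = S.card := by
    rw [Finset.card_sdiff_add_card_inter]
  -- W₀ ⊆ N(T)
  have hW₀nT : ∀ w ∈ W₀, w ∈ nbrF G T := by
    intro w hw
    obtain ⟨t, ht⟩ := hTne
    exact mem_nbrF.2 ⟨t, ht, (hDadj w hw t (hTD ht)).symm⟩
  -- the big independent set I₀
  set I₀ : Finset V := W₀ ∪ ((S \ nbrF G T) ∪ Y) with hI₀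
  have hWY : ∀ w ∈ W₀, ∀ y ∈ Y, ¬ G.Adj w y := by
    intro w hw y hy hadj
    have hynb : y ∈ nbrF G {w} := mem_nbrF_singleton.2 hadj
    have hycl : y ∉ clF G J :=
      Finset.disjoint_left.1 (Finset.disjoint_of_subset_left hYS' hS'R.2) hy
    have hyD2 : y ∈ D := by
      rw [← hnb w hw]
      exact Finset.mem_sdiff.2 ⟨hynb, hycl⟩
    exact hYD y hy hyD2
  have hW₀S' : ∀ w ∈ W₀, w ∉ S' := fun w hw h => hS'nbr w h (hW₀nT w hw)
  have hI₀ind : FIndep G (J ∪ I₀) := by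
    have hclass : ∀ x, x ∈ J ∪ I₀ → x ∈ (J ∪ S) ∨ x ∈ Y := by
      intro x hx
      rcases Finset.mem_union.1 hx with hxJ | hxI
      · exact Or.inl (Finset.mem_union_left _ hxJ)
      · rcases Finset.mem_union.1 hxI with hxW | hx'
        · exact Or.inl (Finset.mem_union_right _ (hW₀S hxW))
        · rcases Finset.mem_union.1 hx' with hxS | hxY
          · exact Or.inl (Finset.mem_union_right _ (Finset.mem_sdiff.1 hxS).1)
          · exact Or.inr hxY
    have hclass2 : ∀ x, x ∈ J ∪ I₀ → x ∈ (J ∪ S') ∨ x ∈ W₀ := by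
      intro x hx
      rcases Finset.mem_union.1 hx with hxJ | hxI
      · exact Or.inl (Finset.mem_union_left _ hxJ)
      · rcases Finset.mem_union.1 hxI with hxW | hx'
        · exact Or.inr hxW
        · rcases Finset.mem_union.1 hx' with hxS | hxY
          · exact Or.inl (Finset.mem_union_right _ (hSnTS' hxS))
          · exact Or.inl (Finset.mem_union_right _ (hYS' hxY))
    intro u hu v hv hadj
    rcases hclass u hu with huJS | huY
    · rcases hclass v hv with hvJS | hvY
      · exact hJSind u huJS v hvJS hadj
      · rcases hclass2 u hu with huJS' | huW
        · exact hJS'ind u huJS' v (Finset.mem_union_right _ (hYS' hvY)) hadj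
        · exact hWY u huW v hvY hadj
    · rcases hclass v hv with hvJS | hvY
      · rcases hclass2 v hv with hvJS' | hvW
        · exact hJS'ind u (Finset.mem_union_right _ (hYS' huY)) v hvJS' hadj
        · exact hWY v hvW u huY hadj.symm
      · exact hJS'ind u (Finset.mem_union_right _ (hYS' huY)) v
          (Finset.mem_union_right _ (hYS' hvY)) hadj
  have hI₀disj : Disjoint I₀ (clF G J) := by
    refine Finset.disjoint_union_left.2 ⟨hWdisj, Finset.disjoint_union_left.2 ⟨?_, ?_⟩⟩
    · exact Finset.disjoint_of_subset_left Finset.sdiff_subset hSdisj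
    · exact Finset.disjoint_of_subset_left hYS' hS'R.2
  obtain ⟨T₂, hI₀T₂, hT₂R⟩ := rext hI₀ind hI₀disj
  have hcT₂ : J.card + T₂.card = k := rmax_card hk hT₂R
  have hI₀card : I₀.card = W₀.card + ((S \ nbrF G T).card + Y.card) := by
    have hd1 : Disjoint (S \ nbrF G T) Y := by
      rw [Finset.disjoint_left]
      intro x hx hxY
      exact (Finset.mem_sdiff.1 hxY).2 (Finset.mem_union_right _ hx)
    have hd2 : Disjoint W₀ ((S \ nbrF G T) ∪ Y) := by
      rw [Finset.disjoint_left]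
      intro x hxW hx
      rcases Finset.mem_union.1 hx with hxS | hxY
      · exact (Finset.mem_sdiff.1 hxS).2 (hW₀nT x hxW)
      · exact hW₀S' x hxW (hYS' hxY)
    rw [hI₀, Finset.card_union_of_disjoint hd2, Finset.card_union_of_disjoint hd1]
  have hI₀le : I₀.card ≤ T₂.card := Finset.card_le_card hI₀T₂
  have hTDcard : T.card ≤ D.card := Finset.card_le_card hTD
  omega

/-- **Core lemma**: in a well-covered graph, any independent set `W` whose members all
have a nonempty neighborhood outside `N[J]` satisfies `|W| ≤ |N(W) \ N[J]|`. -/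
lemma core_lemma {k : ℕ} (hk : ∀ B : Finset V, FMax G B → B.card = k) :
    ∀ (n : ℕ) (J W : Finset V), W.card ≤ n → FIndep G (J ∪ W) → Disjoint W (clF G J) →
    (∀ w ∈ W, (nbrF G {w} \ clF G J).Nonempty) →
    W.card ≤ (nbrF G W \ clF G J).card := by
  intro n
  induction n with
  | zero =>
    intro J W hcard _ _ _
    omega
  | succ n ih =>
    intro J W hWn hind hdisj hne
    rcases W.eq_empty_or_nonempty with rfl | hWne
    · simp
    obtain ⟨w₀, hw₀W, hw₀min⟩ :=
      Finset.exists_min_image W (fun w => (nbrF G {w} \ clF G J).card) hWne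
    classical
    set D : Finset V := nbrF G {w₀} \ clF G J with hD
    set K : Finset V := W.filter (fun w => nbrF G {w} \ clF G J = D) with hKdef
    have hw₀K : w₀ ∈ K := by
      rw [hKdef, Finset.mem_filter]
      exact ⟨hw₀W, rfl⟩
    have hKW : K ⊆ W := Finset.filter_subset _ _
    have hKval : ∀ w ∈ K, nbrF G {w} \ clF G J = D := by
      intro w hw
      exact (Finset.mem_filter.1 hw).2
    -- twin lemma: |K| ≤ |D|
    have hKD : K.card ≤ D.card := by
      refine twin_lemma hk ?_ ?_ ⟨w₀, hw₀K⟩ (hne w₀ hw₀W) hKval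
      · exact findep_subset hind (Finset.union_subset_union_right hKW)
      · exact Finset.disjoint_of_subset_left hKW hdisj
    set J' : Finset V := insert w₀ J with hJ'
    set W' : Finset V := W \ K with hW'
    have hW'W : W' ⊆ W := Finset.sdiff_subset
    -- no member of W is adjacent to another member of W, nor lies in J
    have hWadj : ∀ u ∈ W, ∀ v ∈ W, ¬ G.Adj u v := by
      intro u hu v hv
      exact hind u (Finset.mem_union_right _ hu) v (Finset.mem_union_right _ hv)
    have hclJ' : ∀ x, x ∈ clF G J' → x = w₀ ∨ x ∈ clF G J ∨ G.Adj w₀ x := by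
      intro x hx
      rcases Finset.mem_union.1 hx with hxJ | hxn
      · rcases Finset.mem_insert.1 hxJ with rfl | hxJ''
        · exact Or.inl rfl
        · exact Or.inr (Or.inl (subset_clF hxJ''))
      · obtain ⟨a, ha, hadj⟩ := mem_nbrF.1 hxn
        rcases Finset.mem_insert.1 ha with rfl | haJ
        · exact Or.inr (Or.inr hadj)
        · exact Or.inr (Or.inl (nbrF_subset_clF (mem_nbrF.2 ⟨a, haJ, hadj⟩)))
    have hW'ind : FIndep G (J' ∪ W') := by
      refine findep_subset hind ?_
      intro x hx
      rcases Finset.mem_union.1 hx with hxJ | hxW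
      · rcases Finset.mem_insert.1 hxJ with rfl | hxJ''
        · exact Finset.mem_union_right _ hw₀W
        · exact Finset.mem_union_left _ hxJ''
      · exact Finset.mem_union_right _ (hW'W hxW)
    have hW'disj : Disjoint W' (clF G J') := by
      rw [Finset.disjoint_left]
      intro x hxW' hxcl
      have hxW : x ∈ W := hW'W hxW'
      rcases hclJ' x hxcl with rfl | hcl | hadj
      · exact (Finset.mem_sdiff.1 hxW').2 hw₀K
      · exact Finset.disjoint_left.1 hdisj hxW hcl
      · exact hWadj w₀ hw₀W x hxW hadj
    -- relative neighborhoods w.r.t. J' equal (rel nbhd w.r.t. J) minus D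
    have hrel : ∀ w ∈ W', (nbrF G {w} \ clF G J) \ D ⊆ nbrF G {w} \ clF G J' := by
      intro w hw x hx
      obtain ⟨hx1, hxD⟩ := Finset.mem_sdiff.1 hx
      obtain ⟨hxnb, hxcl⟩ := Finset.mem_sdiff.1 hx1
      refine Finset.mem_sdiff.2 ⟨hxnb, fun hxcl' => ?_⟩
      rcases hclJ' x hxcl' with rfl | hcl | hadj
      · exact hWadj w (hW'W hw) x hw₀W (mem_nbrF_singleton.1 hxnb)
      · exact hxcl hcl
      · exact hxD (Finset.mem_sdiff.2 ⟨mem_nbrF_singleton.2 hadj, hxcl⟩)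
    have hW'ne : ∀ w ∈ W', (nbrF G {w} \ clF G J').Nonempty := by
      intro w hw
      have hnsub : ¬ (nbrF G {w} \ clF G J ⊆ D) := by
        intro hsub
        have hcard := hw₀min w (hW'W hw)
        have heq := Finset.eq_of_subset_of_card_le hsub hcard
        exact (Finset.mem_sdiff.1 hw).2
          (Finset.mem_filter.2 ⟨hW'W hw, heq⟩)
      obtain ⟨x, hx⟩ := Finset.not_subset.1 hnsub
      exact ⟨x, hrel w hw (Finset.mem_sdiff.2 ⟨hx.1, hx.2⟩)⟩
    have hW'card : W'.card ≤ n := by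
      have h1 : W'.card + K.card = W.card := Finset.card_sdiff_add_card_eq_card hKW
      have h2 : 1 ≤ K.card := Finset.card_pos.2 ⟨w₀, hw₀K⟩
      omega
    have hIH := ih J' W' hW'card hW'ind hW'disj hW'ne
    -- assemble
    set X : Finset V := nbrF G W' \ clF G J' with hX
    have hXsub : X ⊆ nbrF G W \ clF G J := by
      intro x hx
      obtain ⟨hx1, hx2⟩ := Finset.mem_sdiff.1 hx
      refine Finset.mem_sdiff.2 ⟨nbrF_mono hW'W hx1, fun hcl => ?_⟩
      exact hx2 (clF_mono (Finset.subset_insert _ _) hcl)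
    have hDsub : D ⊆ nbrF G W \ clF G J := by
      intro x hx
      obtain ⟨hx1, hx2⟩ := Finset.mem_sdiff.1 hx
      exact Finset.mem_sdiff.2 ⟨nbrF_mono (Finset.singleton_subset_iff.2 hw₀W) hx1, hx2⟩
    have hXD : Disjoint X D := by
      rw [Finset.disjoint_left]
      intro x hxX hxD
      have hx1 : x ∈ nbrF G {w₀} := (Finset.mem_sdiff.1 hxD).1
      have hx2 : x ∈ clF G J' := by
        refine nbrF_subset_clF (nbrF_mono ?_ hx1)
        exact Finset.singleton_subset_iff.2 (Finset.mem_insert_self _ _)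
      exact (Finset.mem_sdiff.1 hxX).2 hx2
    have hfin : X.card + D.card ≤ (nbrF G W \ clF G J).card := by
      rw [← Finset.card_union_of_disjoint hXD]
      exact Finset.card_le_card (Finset.union_subset hXsub hDsub)
    have hWsplit : W'.card + K.card = W.card := Finset.card_sdiff_add_card_eq_card hKW
    omega

end WCAux

/-- If `G` is well-covered (no isolated vertices and all maximal independent
sets have the same cardinality), then every maximal independent set has cardinality at most
`|V(G)|/2`; equivalently, every minimal vertex cover has cardinality at least `|V(G)|/2`
(i.e. `2·height(I(G)) ≥ |V(G)|`). -/
theorem wellCovered_half {V : Type*} [Fintype V] [DecidableEq V] (G : SimpleGraph V)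
    (hiso : NoIsolated G)
    (hwc : ∃ k : ℕ, ∀ S : Finset V, IsMaxIndep G ↑S → S.card = k) :
    (∀ S : Finset V, IsMaxIndep G ↑S → 2 * S.card ≤ Fintype.card V) ∧
    (∀ C : Finset V, IsMinVC G ↑C → Fintype.card V ≤ 2 * C.card) := by
  classical
  obtain ⟨k, hk⟩ := hwc
  have hkF : ∀ B : Finset V, FMax G B → B.card = k := fun B hB => hk B (fmax_isMaxIndep hB)
  have hclemp : clF G (∅ : Finset V) = ∅ := by
    rw [clF, Finset.union_eq_empty]
    refine ⟨rfl, ?_⟩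
    rw [Finset.eq_empty_iff_forall_notMem]
    intro x hx
    obtain ⟨a, ha, _⟩ := mem_nbrF.1 hx
    exact absurd ha (Finset.notMem_empty a)
  have main1 : ∀ S : Finset V, IsMaxIndep G ↑S → 2 * S.card ≤ Fintype.card V := by
    intro S hS
    have hSind : FIndep G S := findep_coe.1 hS.1
    have h0 : FIndep G (∅ ∪ S) := by rwa [Finset.empty_union]
    have hdisj : Disjoint S (clF G (∅ : Finset V)) := by
      rw [hclemp]; exact Finset.disjoint_empty_right S
    have hne : ∀ w ∈ S, (nbrF G {w} \ clF G (∅ : Finset V)).Nonempty := by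
      intro w _
      obtain ⟨x, hx⟩ := hiso w
      refine ⟨x, Finset.mem_sdiff.2 ⟨mem_nbrF_singleton.2 hx, ?_⟩⟩
      rw [hclemp]
      exact Finset.notMem_empty x
    have hcore := core_lemma hkF S.card ∅ S le_rfl h0 hdisj hne
    have hSnbr : Disjoint S (nbrF G S) := by
      rw [Finset.disjoint_left]
      intro x hxS hxn
      obtain ⟨a, haS, hadj⟩ := mem_nbrF.1 hxn
      exact hSind a haS x hxS hadj
    have h1 : (nbrF G S \ clF G (∅ : Finset V)).card = (nbrF G S).card := by
      rw [hclemp, Finset.sdiff_empty]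
    have h2 : S.card + (nbrF G S).card = (S ∪ nbrF G S).card :=
      (Finset.card_union_of_disjoint hSnbr).symm
    have h3 : (S ∪ nbrF G S).card ≤ Fintype.card V := by
      rw [← Finset.card_univ]
      exact Finset.card_le_card (Finset.subset_univ _)
    omega
  refine ⟨main1, ?_⟩
  intro C hC
  have hSmax : IsMaxIndep G ↑(Cᶜ) := by
    rw [Finset.coe_compl]
    constructor
    · intro u hu v hv hadj
      rcases hC.1 hadj with h | h
      · exact hu h
      · exact hv h
    · intro T hT hsub
      have hUsub : Tᶜ ⊆ (↑C : Set V) := by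
        intro x hx
        by_contra hxC
        exact hx (hsub hxC)
      have hUVC : IsVC G Tᶜ := by
        intro u v hadj
        by_contra hcon
        push_neg at hcon
        obtain ⟨h1, h2⟩ := hcon
        rw [Set.notMem_compl_iff] at h1 h2
        exact hT u h1 v h2 hadj
      have hU := hC.2 Tᶜ hUVC hUsub
      rw [← compl_compl T, hU]
  have h1 := main1 Cᶜ hSmax
  have h2 : Cᶜ.card = Fintype.card V - C.card := Finset.card_compl C
  have h3 : C.card ≤ Fintype.card V := Finset.card_le_univ C
  omega
end

section
/- Let G be a graph on vertex set X ∪ Y with X = {x_1,...,x_n}, Y = {y_1,...,y_n} disjoint, where X is a minimal vertex cover, Y is a maximal independent set, and x_i y_i ∈ E(G) for all i (a perfect matching). Then G is unmixed (all minimal vertex covers have cardinality n) if and only if: (i) for distinct i,j,k and z_i ∈ {x_i, y_i}, if z_i x_j ∈ E(G) and y_j x_k ∈ E(G), then z_i x_k ∈ E(G); and (ii) if x_i y_j ∈ E(G) then x_i x_j ∉ E(G). -/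
open Relation

/-!
Because of the matching, every vertex cover contains `x_i` or `y_i` for each `i`, so a vertex cover
has exactly `n` elements iff it contains no whole pair `{x_i, y_i}`.

If `G` is unmixed and `s, t` are non-adjacent with `s ~ x_j`, `t ~ y_j`, extend `{s, t}` to a
maximal independent set; its complement is a minimal vertex cover containing both `x_j` and
`y_j`, which is impossible. So every neighbour of `x_j` is adjacent to every neighbour of `y_j`,
and (i), (ii) are instances of this.

Conversely, if a minimal vertex cover contains `x_i` and `y_i`, both have private neighbours outside
it. Since `Y` is independent, that of `y_i` is some `x_j`, and that of `x_i` is `x_k` or `y_k`;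
conditions (i), (ii) and the edge `x_j y_j` produce an edge with both ends outside the cover.
-/

open Finset

section VertexCovers

variable {V : Type*} {G : SimpleGraph V}

lemma IsMinVC.exists_adj_notMem {C : Set V} (hC : IsMinVC G C) {v : V} (hv : v ∈ C) :
    ∃ u, G.Adj v u ∧ u ∉ C := by
  by_contra! h
  have hcover : IsVC G (C \ {v}) := by
    intro a b hab
    by_cases ha : a = v
    · subst ha
      exact Or.inr ⟨h b hab, hab.ne'⟩
    by_cases hb : b = v
    · subst hb
      exact Or.inl ⟨h a hab.symm, hab.ne⟩
    exact (hC.1 hab).imp (fun haC => ⟨haC, ha⟩) (fun hbC => ⟨hbC, hb⟩)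
  have hv' : v ∈ C \ {v} := by rwa [hC.2 _ hcover Set.sdiff_subset]
  exact hv'.2 rfl

lemma IsMaxIndep.isMinVC_compl {T : Set V} (hT : IsMaxIndep G T) : IsMinVC G Tᶜ := by
  refine ⟨fun u v huv => ?_, fun D hD hDT => ?_⟩
  · by_contra! h
    exact hT.1 u (not_not.1 h.1) v (not_not.1 h.2) huv
  · have hDc : IsIndep G Dᶜ := fun u hu v hv huv => (hD huv).elim hu hv
    rw [← compl_compl D, hT.2 _ hDc (Set.subset_compl_comm.1 hDT)]

lemma IsIndep.exists_isMaxIndep_superset [Finite V] {S : Set V} (hS : IsIndep G S) :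
    ∃ T, S ⊆ T ∧ IsMaxIndep G T := by
  obtain ⟨T, hST, hT⟩ := Finite.exists_le_maximal hS
  exact ⟨T, hST, hT.1, fun U hU hTU => (hT.eq_of_le hU hTU).symm⟩

lemma isIndep_pair {s t : V} (h : ¬G.Adj s t) : IsIndep G {s, t} := by
  rintro u (rfl | rfl) v (rfl | rfl) huv
  exacts [G.irrefl huv, h huv, h huv.symm, G.irrefl huv]

end VertexCovers

lemma Finset.card_eq_card_add_card_filter_inl_mem_and_inr_mem {α : Type*} [Fintype α]
    [DecidableEq α] {C : Finset (α ⊕ α)} (h : ∀ i, Sum.inl i ∈ C ∨ Sum.inr i ∈ C) :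
    #C = Fintype.card α + #{i | Sum.inl i ∈ C ∧ Sum.inr i ∈ C} := by
  have hunion : C.toLeft ∪ C.toRight = univ := by
    ext i
    simpa using h i
  have hinter :
      C.toLeft ∩ C.toRight = ({i | Sum.inl i ∈ C ∧ Sum.inr i ∈ C} : Finset α) := by
    ext i
    simp
  rw [← card_toLeft_add_card_toRight, ← card_union_add_card_inter, hunion, hinter, card_univ]

section PerfectMatching

variable {n : ℕ} {G : SimpleGraph (Vtx n)}

lemma IsVC.card_eq_iff_forall_not_xv_mem_and_yv_mem (hm : ∀ i, G.Adj (xv i) (yv i))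
    {C : Finset (Vtx n)} (hC : IsVC G ↑C) : #C = n ↔ ∀ i, ¬(xv i ∈ C ∧ yv i ∈ C) := by
  classical
  rw [card_eq_card_add_card_filter_inl_mem_and_inr_mem (fun i => hC (hm i)), Fintype.card_fin,
    Nat.add_eq_left, card_eq_zero, filter_eq_empty_iff]
  simp [xv, yv]

lemma adj_of_adj_xv_of_adj_yv (hm : ∀ i, G.Adj (xv i) (yv i))
    (hU : ∀ C : Finset (Vtx n), IsMinVC G ↑C → #C = n) {s t : Vtx n} {j : Fin n}
    (hs : G.Adj s (xv j)) (ht : G.Adj t (yv j)) : G.Adj s t := by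
  classical
  by_contra hst
  obtain ⟨T, hsubT, hT⟩ := (isIndep_pair hst).exists_isMaxIndep_superset
  have hC : IsMinVC G ↑(Tᶜ.toFinset) := by simpa using hT.isMinVC_compl
  have hpair := (hC.1.card_eq_iff_forall_not_xv_mem_and_yv_mem hm).1 (hU _ hC) j
  have hx : xv j ∉ T := fun hx => hT.1 s (hsubT (by simp)) _ hx hs
  have hy : yv j ∉ T := fun hy => hT.1 t (hsubT (by simp)) _ hy ht
  exact hpair ⟨by simpa using hx, by simpa using hy⟩

lemma IsMinVC.not_xv_mem_and_yv_mem (hY : IsIndep G (Set.range yv))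
    (hm : ∀ i, G.Adj (xv i) (yv i)) (hI : CondI G) (hII : CondII G) {C : Set (Vtx n)}
    (hC : IsMinVC G C) (i : Fin n) :
    ¬(xv i ∈ C ∧ yv i ∈ C) := by
  rintro ⟨hxi, hyi⟩
  obtain ⟨u, hyu, huC⟩ := hC.exists_adj_notMem hyi
  obtain ⟨j, rfl⟩ : ∃ j, u = xv j := by
    rcases u with j | j
    · exact ⟨j, rfl⟩
    · exact (hY _ ⟨i, rfl⟩ _ ⟨j, rfl⟩ hyu).elim
  have hij : i ≠ j := by rintro rfl; exact huC hxi
  obtain ⟨z, hxz, hzC⟩ := hC.exists_adj_notMem hxi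
  obtain ⟨k, hzk⟩ : ∃ k, z ∈ ({xv k, yv k} : Set (Vtx n)) := by
    rcases z with k | k
    exacts [⟨k, Or.inl rfl⟩, ⟨k, Or.inr rfl⟩]
  have hki : k ≠ i := by
    rintro rfl
    rcases hzk with rfl | rfl
    exacts [G.irrefl hxz, hzC hyi]
  by_cases hkj : k = j
  · subst hkj
    rcases hzk with rfl | rfl
    · exact hII _ _ hyu.symm hxz.symm
    · exact (hC.1 (hm k)).elim huC hzC
  · have hzj := hI k i j hki hij hkj z hzk hxz.symm hyu
    exact (hC.1 hzj).elim hzC huC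

end PerfectMatching

theorem unmixed_iff_conditions_general {n : ℕ} (G : SimpleGraph (Vtx n))
    (hstar : StarCond G) :
    (∀ C : Finset (Vtx n), IsMinVC G ↑C → C.card = n) ↔ (CondI G ∧ CondII G) := by
  obtain ⟨-, ⟨hY, -⟩, hm⟩ := hstar
  constructor
  · intro hU
    refine ⟨fun i j k _ _ _ z _ hzj hyk => ?_, fun i j hxy hxx => ?_⟩
    · exact adj_of_adj_xv_of_adj_yv hm hU hzj hyk.symm
    · exact G.irrefl (adj_of_adj_xv_of_adj_yv hm hU hxx hxy)
  · rintro ⟨hI, hII⟩ C hC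
    exact (hC.1.card_eq_iff_forall_not_xv_mem_and_yv_mem hm).2
      (hC.not_xv_mem_and_yv_mem hY hm hI hII)

/-- Proposition 2.3 of [CRT]. Let `G` be a graph with `2n` non-isolated
vertices, minimum vertex cover size `n`, satisfying condition (∗). Then `G` is unmixed
(all minimal vertex covers have cardinality `n`) iff conditions (i) and (ii) hold. -/
theorem unmixed_iff_conditions {n : ℕ} (G : SimpleGraph (Vtx n))
    (hiso : NoIsolated G) (hht : HeightN G) (hstar : StarCond G) :
    (∀ C : Finset (Vtx n), IsMinVC G ↑C → C.card = n) ↔ (CondI G ∧ CondII G) :=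
  unmixed_iff_conditions_general G hstar
end

section
/- Let G be a Cohen-Macaulay very well-covered graph with 2n vertices satisfying conditions (∗) and (∗∗), with deg(y_1) = 1 and x_1 y_1 ∈ E(G). If x_t ∈ N_G(x_1), then y_t is an isolated vertex in the induced subgraph G \ ({x_1} ∪ N_G(x_1)). -/
open Relation

section

variable {n : ℕ} {G : SimpleGraph (Vtx n)}

theorem exists_eq_xv_of_adj_yv (hY : IsIndep G (Set.range yv)) {t : Fin n} {v : Vtx n}
    (h : G.Adj (yv t) v) : ∃ k, v = xv k := by
  rcases v with k | k
  · exact ⟨k, rfl⟩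
  · exact absurd h (hY _ ⟨t, rfl⟩ _ ⟨k, rfl⟩)

theorem CondII.yv_not_mem_closedNbhd (h2 : CondII G) {i t : Fin n}
    (hit : G.Adj (xv i) (xv t)) : yv t ∉ ({xv i} ∪ G.neighborSet (xv i) : Set (Vtx n)) := by
  rintro (h | h)
  · cases h
  · exact h2 i t h hit

theorem CondI.adj_xv_of_adj_yv (h1 : CondI G) {i t k : Fin n} (hit : G.Adj (xv i) (xv t))
    (htk : G.Adj (yv t) (xv k)) (hik : i ≠ k) : G.Adj (xv i) (xv k) := by
  by_cases heq : t = k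
  · exact heq ▸ hit
  · have hne : i ≠ t := fun h => G.irrefl (h ▸ hit)
    exact h1 i t k hne heq hik (xv i) (Or.inl rfl) hit htk

theorem neighborSet_yv_subset_closedNbhd (hY : IsIndep G (Set.range yv)) (h1 : CondI G)
    {i t : Fin n} (hit : G.Adj (xv i) (xv t)) :
    G.neighborSet (yv t) ⊆ {xv i} ∪ G.neighborSet (xv i) := by
  intro v hv
  obtain ⟨k, rfl⟩ := exists_eq_xv_of_adj_yv hY hv
  by_cases hik : i = k
  · exact Or.inl (hik ▸ rfl)
  · exact Or.inr (h1.adj_xv_of_adj_yv hit hv hik)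

end

theorem claim1_yt_isolated_general {n : ℕ} (hn : 0 < n) (G : SimpleGraph (Vtx n))
    (hstar : StarCond G) (h1 : CondI G) (h2 : CondII G)
    (t : Fin n) (ht : G.Adj (xv ⟨0, hn⟩) (xv t)) :
    yv t ∉ ({xv ⟨0, hn⟩} ∪ G.neighborSet (xv ⟨0, hn⟩) : Set (Vtx n)) ∧
    ∀ v, G.Adj (yv t) v → v ∈ ({xv ⟨0, hn⟩} ∪ G.neighborSet (xv ⟨0, hn⟩) : Set (Vtx n)) :=
  ⟨h2.yv_not_mem_closedNbhd ht, fun _ hv => neighborSet_yv_subset_closedNbhd hstar.2.1.1 h1 ht hv⟩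

/-- Claim 1 in Theorem 3.1. Let `G` be a Cohen-Macaulay very well-covered
graph with `2n` vertices satisfying (∗) and (∗∗), with `deg(y_1) = 1` and `x_1 y_1 ∈ E(G)`.
If `x_t ∈ N_G(x_1)`, then `y_t` is isolated in `G \ ({x_1} ∪ N_G(x_1))`. -/
theorem claim1_yt_isolated {n : ℕ} (hn : 0 < n) (G : SimpleGraph (Vtx n))
    (hiso : NoIsolated G) (hht : HeightN G) (hstar : StarCond G)
    (hss : StarStarCond G) (h1 : CondI G) (h2 : CondII G)
    (hdeg : ∀ v, G.Adj (yv ⟨0, hn⟩) v → v = xv ⟨0, hn⟩)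
    (hx1y1 : G.Adj (xv ⟨0, hn⟩) (yv ⟨0, hn⟩))
    (t : Fin n) (ht : G.Adj (xv ⟨0, hn⟩) (xv t)) :
    yv t ∉ ({xv ⟨0, hn⟩} ∪ G.neighborSet (xv ⟨0, hn⟩) : Set (Vtx n)) ∧
    ∀ v, G.Adj (yv t) v → v ∈ ({xv ⟨0, hn⟩} ∪ G.neighborSet (xv ⟨0, hn⟩) : Set (Vtx n)) :=
  claim1_yt_isolated_general hn G hstar h1 h2 t ht
end

section
/- Let G be a very well-covered graph with 2n vertices satisfying (∗), (∗∗), and conditions (i) and (ii). Then the independence complex of G is vertex decomposable. -/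
open Relation

/-- The link of the vertex `x` in the simplicial complex `Δ`. -/
def linkC {V : Type*} [DecidableEq V] (Δ : Set (Finset V)) (x : V) : Set (Finset V) :=
  {s | x ∉ s ∧ insert x s ∈ Δ}

/-- The deletion of the vertex `x` from the simplicial complex `Δ`. -/
def delC {V : Type*} (Δ : Set (Finset V)) (x : V) : Set (Finset V) :=
  {s | x ∉ s ∧ s ∈ Δ}

/-- `s` is a facet (maximal face) of `Δ`. -/
def IsFacet {V : Type*} (Δ : Set (Finset V)) (s : Finset V) : Prop :=
  s ∈ Δ ∧ ∀ t ∈ Δ, s ⊆ t → s = t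

/-- Vertex decomposability of a simplicial complex: `Δ` is empty, or a simplex,
or it has a shedding vertex `x` such that the link and deletion of `x` are vertex
decomposable and every facet of the deletion is a facet of `Δ`. -/
inductive IsVD {V : Type*} [DecidableEq V] : Set (Finset V) → Prop
  | empty : IsVD ∅
  | simplex (s : Finset V) : IsVD {t | t ⊆ s}
  | step (Δ : Set (Finset V)) (x : V) : IsVD (linkC Δ x) → IsVD (delC Δ x) →
      (∀ s, IsFacet (delC Δ x) s → IsFacet Δ s) → IsVD Δ

/-- The independence complex of a graph: faces are the independent sets. -/
def indComplex {V : Type*} (G : SimpleGraph V) : Set (Finset V) :=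
  {s | ∀ u ∈ s, ∀ v ∈ s, ¬ G.Adj u v}

/-- The independence complex of the induced subgraph `G \ S`. -/
def indComplexAvoid {V : Type*} (G : SimpleGraph V) (S : Set V) : Set (Finset V) :=
  {s | (∀ v ∈ s, v ∉ S) ∧ s ∈ indComplex G}

/-! Work with induced subgraphs `G \ S` in which every `x_k` that has lost its partner `y_k` is
isolated. If some pair `x_i, y_i` survives, take the least such `i`: by (∗∗), `y_i` is then a leaf
of `G \ S` hanging on `x_i`, so `x_i` is a shedding vertex. Removing `x_i` (the deletion) or its
closed neighbourhood (the link) keeps the invariant, the latter by condition (i), and we recurse.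
Once no pair survives, `G \ S` has no edges and its independence complex is a simplex. -/

section IndependenceComplex

variable {V : Type*} {G : SimpleGraph V} {S : Set V}

theorem indComplexAvoid_empty : indComplexAvoid G ∅ = indComplex G := by
  ext s
  exact ⟨fun h => h.2, fun h => ⟨fun _ _ hv => hv, h⟩⟩

theorem delC_indComplexAvoid (x : V) :
    delC (indComplexAvoid G S) x = indComplexAvoid G (insert x S) := by
  ext s
  simp only [delC, indComplexAvoid, Set.mem_ofPred_eq, Set.mem_insert_iff, not_or]
  constructor
  · rintro ⟨hxs, havoid, hind⟩
    exact ⟨fun v hv => ⟨fun hvx => hxs (hvx ▸ hv), havoid v hv⟩, hind⟩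
  · rintro ⟨havoid, hind⟩
    exact ⟨fun hxs => (havoid x hxs).1 rfl, fun v hv => (havoid v hv).2, hind⟩

theorem linkC_indComplexAvoid [DecidableEq V] {x : V} (hx : x ∉ S) :
    linkC (indComplexAvoid G S) x =
      indComplexAvoid G (S ∪ insert x (G.neighborSet x)) := by
  ext s
  simp only [linkC, indComplexAvoid, indComplex, Set.mem_ofPred_eq, Set.mem_union,
    Set.mem_insert_iff, SimpleGraph.mem_neighborSet, Finset.mem_insert, not_or]
  constructor
  · rintro ⟨hxs, havoid, hind⟩
    refine ⟨fun v hv => ⟨havoid v (Or.inr hv), fun hvx => hxs (hvx ▸ hv),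
      hind x (Or.inl rfl) v (Or.inr hv)⟩, fun u hu v hv => hind u (Or.inr hu) v (Or.inr hv)⟩
  · rintro ⟨havoid, hind⟩
    refine ⟨fun hxs => (havoid x hxs).2.1 rfl, ?_, ?_⟩
    · rintro v (rfl | hv)
      exacts [hx, (havoid v hv).1]
    · rintro u (rfl | hu) v (rfl | hv) huv
      · exact G.irrefl huv
      · exact (havoid v hv).2.2 huv
      · exact (havoid u hu).2.2 huv.symm
      · exact hind u hu v hv huv

theorem isVD_indComplexAvoid_of_forall_not_adj [Fintype V] [DecidableEq V]
    (h : ∀ u v, u ∉ S → v ∉ S → ¬ G.Adj u v) : IsVD (indComplexAvoid G S) := by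
  classical
  convert IsVD.simplex Sᶜ.toFinset using 1
  ext s
  simp only [indComplexAvoid, indComplex, Set.mem_ofPred_eq, Finset.subset_iff,
    Set.mem_toFinset, Set.mem_compl_iff]
  exact ⟨fun hs => hs.1, fun hs => ⟨hs, fun u hu v hv => h u v (hs _ hu) (hs _ hv)⟩⟩

/-- A facet of the deletion of `x` avoids `x`, so it contains the leaf `y`, and then no face
containing it can contain `x`. -/
theorem isFacet_of_isFacet_delC_of_leaf {x y : V} (hy : y ∉ S) (hxy : G.Adj x y)
    (hleaf : ∀ w, w ∉ S → G.Adj y w → w = x) (s : Finset V)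
    (hs : IsFacet (delC (indComplexAvoid G S) x) s) : IsFacet (indComplexAvoid G S) s := by
  classical
  obtain ⟨⟨hxs, havoid, hind⟩, hmax⟩ := hs
  have hys : y ∈ s := by
    by_contra hys
    have hins : insert y s ∈ delC (indComplexAvoid G S) x := by
      refine ⟨?_, ?_, ?_⟩
      · rw [Finset.mem_insert, not_or]
        exact ⟨G.ne_of_adj hxy, hxs⟩
      · rintro v hv
        rcases Finset.mem_insert.mp hv with rfl | hv
        exacts [hy, havoid v hv]
      · intro u hu v hv huv
        rw [Finset.mem_insert] at hu hv
        rcases hu with rfl | hu <;> rcases hv with rfl | hv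
        · exact G.irrefl huv
        · exact hxs (hleaf v (havoid v hv) huv ▸ hv)
        · exact hxs (hleaf u (havoid u hu) huv.symm ▸ hu)
        · exact hind u hu v hv huv
    exact hys (hmax _ hins (Finset.subset_insert y s) ▸ Finset.mem_insert_self y s)
  refine ⟨⟨havoid, hind⟩, fun t ht hst => hmax t ⟨?_, ht⟩ hst⟩
  exact fun hxt => ht.2 x hxt y (hst hys) hxy

theorem isVD_indComplexAvoid_of_leaf [DecidableEq V] {x y : V} (hx : x ∉ S) (hy : y ∉ S)
    (hxy : G.Adj x y) (hleaf : ∀ w, w ∉ S → G.Adj y w → w = x)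
    (hlink : IsVD (indComplexAvoid G (S ∪ insert x (G.neighborSet x))))
    (hdel : IsVD (indComplexAvoid G (insert x S))) : IsVD (indComplexAvoid G S) :=
  IsVD.step _ x (linkC_indComplexAvoid hx ▸ hlink) (delC_indComplexAvoid x ▸ hdel)
    (isFacet_of_isFacet_delC_of_leaf hy hxy hleaf)

theorem ncard_compl_lt_of_mem_diff [Finite V] {T : Set V} {x : V} (hST : S ⊆ T)
    (hxT : x ∈ T) (hxS : x ∉ S) : Tᶜ.ncard < Sᶜ.ncard :=
  Set.ncard_lt_ncard <|
    compl_lt_compl_iff_lt.mpr ((Set.ssubset_iff_of_subset hST).mpr ⟨x, hxT, hxS⟩)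

end IndependenceComplex

section VeryWellCovered

variable {n : ℕ} {G : SimpleGraph (Vtx n)}

def OrphansIsolated (G : SimpleGraph (Vtx n)) (S : Set (Vtx n)) : Prop :=
  ∀ k, yv k ∈ S → xv k ∉ S → ∀ w, w ∉ S → ¬ G.Adj (xv k) w

theorem OrphansIsolated.insert_xv {S : Set (Vtx n)} (hS : OrphansIsolated G S) (i : Fin n) :
    OrphansIsolated G (insert (xv i) S) := by
  intro k hyk hxk w hw
  have hyk : yv k ∈ S := hyk.resolve_left Sum.inr_ne_inl
  exact hS k hyk (fun h => hxk (Or.inr h)) w (fun h => hw (Or.inr h))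

/-- Condition (i) is what keeps the invariant: a survivor adjacent to a new orphan `x_k`
(where `x_i y_k` is an edge) would be adjacent to `x_i`, hence removed. -/
theorem OrphansIsolated.union_closedNeighborhood (h1 : CondI G)
    (hxy : ∀ i, G.Adj (xv i) (yv i)) {S : Set (Vtx n)} (hS : OrphansIsolated G S)
    (i : Fin n) : OrphansIsolated G (S ∪ insert (xv i) (G.neighborSet (xv i))) := by
  intro k hyk hxk w hw hkw
  simp only [Set.mem_union, Set.mem_insert_iff, SimpleGraph.mem_neighborSet, not_or]
    at hyk hxk hw
  obtain ⟨hwS, hwx, hiw⟩ := hw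
  rcases hyk with hyk | hyk | hik
  · exact hS k hyk hxk.1 w hwS hkw
  · exact Sum.inr_ne_inl hyk
  have hki : k ≠ i := fun e => hxk.2.1 (congrArg xv e)
  cases w with
  | inl j =>
    have hjk : j ≠ k := by rintro rfl; exact G.irrefl hkw
    exact hiw (h1 j k i hjk hki (fun e => hwx (congrArg xv e)) (xv j) (Or.inl rfl)
      hkw.symm hik.symm).symm
  | inr j =>
    have hjk : j ≠ k := by rintro rfl; exact hiw hik
    have hji : j ≠ i := by rintro rfl; exact hiw (hxy j)
    exact hiw (h1 j k i hjk hki hji (yv j) (Or.inr rfl) hkw.symm hik.symm).symm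

theorem OrphansIsolated.forall_not_adj (hY : ∀ i j, ¬ G.Adj (yv i) (yv j))
    {S : Set (Vtx n)} (hS : OrphansIsolated G S)
    (hdead : ∀ i, xv i ∉ S → yv i ∈ S) : ∀ u v, u ∉ S → v ∉ S → ¬ G.Adj u v := by
  have hx : ∀ k v, xv k ∉ S → v ∉ S → ¬ G.Adj (xv k) v :=
    fun k v hk hv => hS k (hdead k hk) hk v hv
  rintro (k | k) (j | j) hu hv huv
  · exact hx k _ hu hv huv
  · exact hx k _ hu hv huv
  · exact hx j _ hv hu huv.symm
  · exact hY k j huv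

theorem OrphansIsolated.eq_of_adj_yv_of_minimal (hY : ∀ i j, ¬ G.Adj (yv i) (yv j))
    (hss : StarStarCond G) {S : Set (Vtx n)}
    (hS : OrphansIsolated G S) {i : Fin n} (hyi : yv i ∉ S)
    (hmin : ∀ k, xv k ∉ S → yv k ∉ S → i ≤ k) (w : Vtx n) (hw : w ∉ S)
    (hiw : G.Adj (yv i) w) : w = xv i := by
  rcases w with k | k
  · have hki : k ≤ i := hss k i hiw.symm
    by_contra hne
    have hyk : yv k ∈ S := by
      by_contra hyk
      exact hne (congrArg xv (le_antisymm hki (hmin k hw hyk)))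
    exact hS k hyk hw (yv i) hyi hiw.symm
  · exact absurd hiw (hY i k)

theorem isVD_indComplexAvoid (hY : ∀ i j, ¬ G.Adj (yv i) (yv j))
    (hxy : ∀ i, G.Adj (xv i) (yv i)) (hss : StarStarCond G) (h1 : CondI G)
    (S : Set (Vtx n)) (hS : OrphansIsolated G S) : IsVD (indComplexAvoid G S) := by
  by_cases hlive : ∃ i, xv i ∉ S ∧ yv i ∉ S
  · obtain ⟨i, ⟨hxi, hyi⟩, hmin⟩ := wellFounded_lt.has_min _ hlive
    have hmin : ∀ k, xv k ∉ S → yv k ∉ S → i ≤ k :=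
      fun k hxk hyk => not_lt.mp (hmin k ⟨hxk, hyk⟩)
    exact isVD_indComplexAvoid_of_leaf hxi hyi (hxy i)
      (hS.eq_of_adj_yv_of_minimal hY hss hyi hmin)
      (isVD_indComplexAvoid hY hxy hss h1 _ (hS.union_closedNeighborhood h1 hxy i))
      (isVD_indComplexAvoid hY hxy hss h1 _ (hS.insert_xv i))
  · push Not at hlive
    exact isVD_indComplexAvoid_of_forall_not_adj (hS.forall_not_adj hY hlive)
termination_by Sᶜ.ncard
decreasing_by
  · exact ncard_compl_lt_of_mem_diff Set.subset_union_left (Or.inr (Or.inl rfl)) hxi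
  · exact ncard_compl_lt_of_mem_diff (Set.subset_insert _ _) (Set.mem_insert _ _) hxi

end VeryWellCovered

theorem CM_implies_vertexDecomposable_general {n : ℕ} (G : SimpleGraph (Vtx n)) (hstar : StarCond G)
    (hss : StarStarCond G) (h1 : CondI G) :
    IsVD (indComplex G) := by
  rw [← indComplexAvoid_empty]
  exact isVD_indComplexAvoid (fun i j => hstar.2.1.1 (yv i) ⟨i, rfl⟩ (yv j) ⟨j, rfl⟩)
    hstar.2.2 hss h1 ∅ fun _ hk => absurd hk (Set.notMem_empty _)

/-- Theorem 3.1, (1) ⇒ (3). A Cohen-Macaulay very well-covered graph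
with `2n` vertices, i.e. one satisfying (∗), (∗∗), (i) and (ii), has a vertex
decomposable independence complex. -/
theorem CM_implies_vertexDecomposable {n : ℕ} (G : SimpleGraph (Vtx n))
    (hiso : NoIsolated G) (hht : HeightN G) (hstar : StarCond G)
    (hss : StarStarCond G) (h1 : CondI G) (h2 : CondII G) :
    IsVD (indComplex G) :=
  CM_implies_vertexDecomposable_general G hstar hss h1
end

section
/- Let G be a graph with 2n non-isolated vertices, minimum vertex cover size n, satisfying (∗), and let 𝔭 be a minimal prime of the edge ideal I(G) of height n (equivalently, the complement of {v : v ∈ 𝔭} in V(G) is a maximum independent set of size n). If y_i ∈ 𝔭 and there is a directed path from i to j in the semidirected graph 𝔡_G, then y_j ∈ 𝔭. -/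
/-!
The edges `x_k y_k` form a perfect matching, so a vertex cover with only `n` vertices contains
exactly one endpoint of each of them. Hence `y_i ∈ C` forces `x_i ∉ C`, and then a directed
edge `i → j`, i.e. the edge `x_i y_j`, forces `y_j ∈ C`; induct along the path.
-/

open Relation

namespace Finset

open Sum

lemma inl_notMem_of_inr_mem_of_card_le {α : Type*} [Fintype α] [DecidableEq α]
    {u : Finset (α ⊕ α)} (hcov : ∀ a, inl a ∈ u ∨ inr a ∈ u) (hcard : #u ≤ Fintype.card α)
    {a : α} (hr : inr a ∈ u) : inl a ∉ u := by
  intro hl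
  have hunion : u.toLeft ∪ u.toRight = univ :=
    eq_univ_of_forall fun b => by simpa using hcov b
  have hinter : (u.toLeft ∩ u.toRight).Nonempty := ⟨a, by simp [hl, hr]⟩
  have hcount := card_union_add_card_inter u.toLeft u.toRight
  rw [hunion, card_univ, card_toLeft_add_card_toRight] at hcount
  have := hinter.card_pos
  omega

end Finset

lemma yv_mem_of_dirEdge {n : ℕ} {G : SimpleGraph (Vtx n)} (hmatch : ∀ k, G.Adj (xv k) (yv k))
    {C : Finset (Vtx n)} (hC : IsVC G ↑C) (hcard : C.card ≤ n) {i j : Fin n}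
    (hyi : yv i ∈ C) (hij : dirEdge G i j) : yv j ∈ C := by
  have hxi : xv i ∉ C :=
    Finset.inl_notMem_of_inr_mem_of_card_le (fun k => hC (hmatch k))
      (by simpa using hcard) hyi
  exact (hC hij.2).resolve_left hxi

theorem cover_closed_under_reachability_general {n : ℕ} (G : SimpleGraph (Vtx n))
    (hstar : StarCond G)
    (C : Finset (Vtx n)) (hC : IsVC G ↑C) (hcard : C.card = n)
    (i j : Fin n) (hyi : yv i ∈ C)
    (hpath : ReflTransGen (dirEdge G) i j) :
    yv j ∈ C := by
  induction hpath with
  | refl => exact hyi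
  | tail _ hstep ih => exact yv_mem_of_dirEdge hstar.2.2 hC hcard.le ih hstep

/-- Lemma 4.4. Let `G` satisfy (∗), with `2n` non-isolated vertices and
minimum vertex cover size `n`. If `C` is a vertex cover of size `n` (a minimal prime of
`I(G)` of height `n`) containing `y_i`, and `j ⪰ i` in `𝔡_G`, then `y_j ∈ C`. -/
theorem cover_closed_under_reachability {n : ℕ} (G : SimpleGraph (Vtx n))
    (hiso : NoIsolated G) (hht : HeightN G) (hstar : StarCond G)
    (C : Finset (Vtx n)) (hC : IsVC G ↑C) (hcard : C.card = n)
    (i j : Fin n) (hyi : yv i ∈ C)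
    (hpath : ReflTransGen (dirEdge G) i j) :
    yv j ∈ C :=
  cover_closed_under_reachability_general G hstar C hC hcard i j hyi hpath
end

section
/- Let G be a graph with 2n non-isolated vertices, minimum vertex cover size n, satisfying (∗). Let A ⊆ [n] be an antichain in the semidirected graph 𝔡_G (no directed path between any two distinct elements of A) such that Ω_A = {j : j is reachable by a directed path from some element of A, or j ∈ A} contains no undirected edge of 𝔡_G. Then {x_i y_i : i ∈ A} is a set of pairwise 3-disjoint edges of G; in particular a(G) ≥ |A|. -/
open Relation

/-- The edges `ab` and `cd` of `G` are 3-disjoint: the induced subgraph on the four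
(distinct) vertices consists of exactly the two disjoint edges. -/
def ThreeDisjoint {V : Type*} (G : SimpleGraph V) (a b c d : V) : Prop :=
  G.Adj a b ∧ G.Adj c d ∧ a ≠ c ∧ a ≠ d ∧ b ≠ c ∧ b ≠ d ∧
    ¬ G.Adj a c ∧ ¬ G.Adj a d ∧ ¬ G.Adj b c ∧ ¬ G.Adj b d

/-- `B` is a set of pairwise 3-disjoint edges of `G`. -/
def Is3DisjointFamily {V : Type*} (G : SimpleGraph V) (B : Finset (V × V)) : Prop :=
  (∀ e ∈ B, G.Adj e.1 e.2) ∧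
    ∀ e ∈ B, ∀ f ∈ B, e ≠ f → ThreeDisjoint G e.1 e.2 f.1 f.2

/-- `a(G)`: the maximum size of a set of pairwise 3-disjoint edges of `G`. -/
noncomputable def aNum {V : Type*} (G : SimpleGraph V) : ℕ :=
  sSup {k | ∃ B : Finset (V × V), Is3DisjointFamily G B ∧ B.card = k}

/-- `Ω_A`: the set of indices reachable in `𝔡_G` by a directed path from `A` (or in `A`). -/
def Omega {n : ℕ} (G : SimpleGraph (Vtx n)) (A : Finset (Fin n)) : Set (Fin n) :=
  {j | ∃ i ∈ A, ReflTransGen (dirEdge G) i j}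

/-- `A` is an antichain of `𝔡_G`: no directed path between distinct members. -/
def AntichainD {n : ℕ} (G : SimpleGraph (Vtx n)) (A : Finset (Fin n)) : Prop :=
  ∀ i ∈ A, ∀ j ∈ A, i ≠ j → ¬ TransGen (dirEdge G) i j

/-!
The edges `x_i y_i` and `x_j y_j` (`i ≠ j`) can only fail to be 3-disjoint through one of the
edges `x_i x_j`, `x_i y_j`, `y_i x_j`, `y_i y_j`. The last is excluded since `Y` is independent,
the middle two would be directed edges between distinct members of the antichain `A`, and the
first would be an undirected edge inside `A ⊆ Ω_A`.
-/

section ThreeDisjointFamily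

variable {V : Type*} [Finite V] {G : SimpleGraph V}

theorem Is3DisjointFamily.card_le_aNum {B : Finset (V × V)} (hB : Is3DisjointFamily G B) :
    B.card ≤ aNum G := by
  have := Fintype.ofFinite V
  refine le_csSup ⟨Fintype.card (V × V), ?_⟩ ⟨B, hB, rfl⟩
  rintro k ⟨C, -, rfl⟩
  exact C.card_le_univ

theorem card_le_aNum_of_threeDisjoint {ι : Type*} (A : Finset ι) (e : ι → V × V)
    (he : Set.InjOn e A) (hadj : ∀ i ∈ A, G.Adj (e i).1 (e i).2)
    (hdisj : ∀ i ∈ A, ∀ j ∈ A, i ≠ j → ThreeDisjoint G (e i).1 (e i).2 (e j).1 (e j).2) :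
    A.card ≤ aNum G := by
  classical
  rw [← Finset.card_image_of_injOn he]
  refine Is3DisjointFamily.card_le_aNum ⟨?_, ?_⟩
  · simp only [Finset.forall_mem_image]
    exact hadj
  · simp only [Finset.forall_mem_image]
    exact fun i hi j hj hij => hdisj i hi j hj fun h => hij (congrArg e h)

end ThreeDisjointFamily

section SemidirectedGraph

variable {n : ℕ} {G : SimpleGraph (Vtx n)}

theorem mem_omega_of_mem {A : Finset (Fin n)} {i : Fin n} (hi : i ∈ A) : i ∈ Omega G A :=
  ⟨i, hi, ReflTransGen.refl⟩

theorem AntichainD.not_dirEdge {A : Finset (Fin n)} (hA : AntichainD G A) {i j : Fin n}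
    (hi : i ∈ A) (hj : j ∈ A) (hij : i ≠ j) : ¬ dirEdge G i j :=
  fun h => hA i hi j hj hij (TransGen.single h)

theorem threeDisjoint_xv_yv (hY : IsIndep G (Set.range yv)) (hxy : ∀ i, G.Adj (xv i) (yv i))
    {i j : Fin n} (hij : i ≠ j) (hundir : ¬ undirEdge G i j) (hdir : ¬ dirEdge G i j)
    (hdir' : ¬ dirEdge G j i) : ThreeDisjoint G (xv i) (yv i) (xv j) (yv j) := by
  refine ⟨hxy i, hxy j, ?_, Sum.inl_ne_inr, Sum.inr_ne_inl, ?_, hundir, fun h => hdir ⟨hij, h⟩,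
    fun h => hdir' ⟨hij.symm, h.symm⟩, hY _ ⟨i, rfl⟩ _ ⟨j, rfl⟩⟩
  · exact fun h => hij (Sum.inl_injective h)
  · exact fun h => hij (Sum.inr_injective h)

end SemidirectedGraph

theorem antichain_gives_3disjoint_general {n : ℕ} (G : SimpleGraph (Vtx n))
    (hstar : StarCond G)
    (A : Finset (Fin n)) (hA : AntichainD G A)
    (hΩ : ∀ i ∈ Omega G A, ∀ j ∈ Omega G A, ¬ undirEdge G i j) :
    (∀ i ∈ A, ∀ j ∈ A, i ≠ j → ThreeDisjoint G (xv i) (yv i) (xv j) (yv j)) ∧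
    A.card ≤ aNum G := by
  obtain ⟨-, ⟨hY, -⟩, hxy⟩ := hstar
  have hdisj : ∀ i ∈ A, ∀ j ∈ A, i ≠ j → ThreeDisjoint G (xv i) (yv i) (xv j) (yv j) :=
    fun i hi j hj hij => threeDisjoint_xv_yv hY hxy hij
      (hΩ i (mem_omega_of_mem hi) j (mem_omega_of_mem hj))
      (hA.not_dirEdge hi hj hij) (hA.not_dirEdge hj hi hij.symm)
  have hinj : Function.Injective fun i : Fin n => (xv i, yv i) :=
    fun i j h => Sum.inl_injective (congrArg Prod.fst h)
  exact ⟨hdisj, card_le_aNum_of_threeDisjoint A _ hinj.injOn (fun i _ => hxy i) hdisj⟩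

/-- Lemma 4.5. Let `G` satisfy (∗) with `2n` non-isolated vertices and
minimum vertex cover size `n`. If `A` is an antichain of `𝔡_G` such that `Ω_A` contains no
undirected edge of `𝔡_G`, then `{x_i y_i : i ∈ A}` is a set of pairwise 3-disjoint edges of
`G`; in particular `a(G) ≥ |A|`. -/
theorem antichain_gives_3disjoint {n : ℕ} (G : SimpleGraph (Vtx n))
    (hiso : NoIsolated G) (hht : HeightN G) (hstar : StarCond G)
    (A : Finset (Fin n)) (hA : AntichainD G A)
    (hΩ : ∀ i ∈ Omega G A, ∀ j ∈ Omega G A, ¬ undirEdge G i j) :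
    (∀ i ∈ A, ∀ j ∈ A, i ≠ j → ThreeDisjoint G (xv i) (yv i) (xv j) (yv j)) ∧
    A.card ≤ aNum G :=
  antichain_gives_3disjoint_general G hstar A hA hΩ
end

section
/- Let G be a very well-covered graph with 2n vertices satisfying (∗). Then the acyclic reduction Ĝ of G is a Cohen-Macaulay very well-covered graph; concretely, Ĝ has 2t non-isolated vertices, minimum vertex cover size t, and (after relabeling so that directed edges of the condensation go from smaller to larger indices) satisfies conditions (∗), (∗∗), (i), and (ii). -/
/-! Under (i), directed edges of `𝔡_G` compose, so reachability is a single directed edge.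
Hence the condensation is a strict order, sorted topologically by the labeling of the
components, and a directed edge `a → b` of the condensation is realised by a directed edge
`i → j` between any representatives `i ∈ Z_a`, `j ∈ Z_b`; through representatives, (i) and (ii)
for `G` give (i) and (ii) for `Ĝ`. The remaining conditions hold for every graph on
`{u_a, v_a}` that contains the edges `u_a v_a` and no edge `v_a v_b`. -/

open Relation

/-- The strong-connectivity setoid of a relation: mutual reachability. -/
def scSetoid {α : Type*} (r : α → α → Prop) : Setoid α where
  r i j := ReflTransGen r i j ∧ ReflTransGen r j i
  iseqv := ⟨fun _ => ⟨.refl, .refl⟩, fun h => ⟨h.2, h.1⟩,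
    fun h1 h2 => ⟨h1.1.trans h2.1, h2.2.trans h1.2⟩⟩

/-- The set of strong components of the semidirected graph `𝔡_G`. -/
def SC {n : ℕ} (G : SimpleGraph (Vtx n)) : Type :=
  Quotient (scSetoid (dirEdge G))

/-- The class of `i` in the strong components. -/
def scMk {n : ℕ} (G : SimpleGraph (Vtx n)) (i : Fin n) : SC G :=
  Quotient.mk (scSetoid (dirEdge G)) i

/-- Directed edge `a → b` of the condensation `𝔡̂_G`: the components are distinct and
there is a directed path in `𝔡_G` from a vertex of `Z_a` to a vertex of `Z_b`. -/
def condDir {n : ℕ} (G : SimpleGraph (Vtx n)) (a b : SC G) : Prop :=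
  a ≠ b ∧ ∃ i j : Fin n, scMk G i = a ∧ scMk G j = b ∧ ReflTransGen (dirEdge G) i j

/-- Undirected edge `ab` of the condensation `𝔡̂_G`. -/
def condUndir {n : ℕ} (G : SimpleGraph (Vtx n)) (a b : SC G) : Prop :=
  a ≠ b ∧ ∃ i j : Fin n, scMk G i = a ∧ scMk G j = b ∧ undirEdge G i j

/-- `A'` is an antichain of the condensation `𝔡̂_G`. -/
def AntichainC {n : ℕ} (G : SimpleGraph (Vtx n)) (A' : Finset (SC G)) : Prop :=
  ∀ a ∈ A', ∀ b ∈ A', a ≠ b → ¬ TransGen (condDir G) a b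

/-- `Ω_{A'}` for an antichain `A'` of the condensation: the union of the components `Z_b`
with `b ⪰ a` for some `a ∈ A'`. -/
def OmegaC {n : ℕ} (G : SimpleGraph (Vtx n)) (A' : Finset (SC G)) : Set (Fin n) :=
  {j | ∃ a ∈ A', ReflTransGen (condDir G) a (scMk G j)}

/-- The vertex set `{x_i : i ∉ Ω} ∪ {y_i : i ∈ Ω}`. -/
def coverOf {n : ℕ} (Ω : Set (Fin n)) : Set (Vtx n) :=
  {v | ∃ i : Fin n, (v = xv i ∧ i ∉ Ω) ∨ (v = yv i ∧ i ∈ Ω)}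
/-- The underlying relation of the acyclic reduction `Ĝ`, given a labeling
`e : Fin t ≃ SC G` of the strong components: edges `u_a v_a`, edges `u_a v_b` for
directed edges `a → b` of `𝔡̂_G`, and edges `u_a u_b` for undirected edges `ab` of `𝔡̂_G`. -/
def hatRel {n t : ℕ} (G : SimpleGraph (Vtx n)) (e : Fin t ≃ SC G) :
    Vtx t → Vtx t → Prop
  | Sum.inl a, Sum.inr b => a = b ∨ condDir G (e a) (e b)
  | Sum.inl a, Sum.inl b => condUndir G (e a) (e b)
  | _, _ => False

/-- The acyclic reduction `Ĝ` of `G`, relative to the labeling `e` of strong components. -/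
def hatG {n t : ℕ} (G : SimpleGraph (Vtx n)) (e : Fin t ≃ SC G) :
    SimpleGraph (Vtx t) :=
  SimpleGraph.fromRel (hatRel G e)

theorem exists_fin_equiv_lt_of_isStrictOrder {α : Type*} [Finite α] (r : α → α → Prop)
    [IsStrictOrder α r] : ∃ (t : ℕ) (e : Fin t ≃ α), ∀ a b, r (e a) (e b) → a < b := by
  let := partialOrderOfSO r
  let : Fintype (LinearExtension α) := Fintype.ofFinite α
  let e : Fin _ ≃o LinearExtension α := monoEquivOfFin _ rfl
  have hlin : ∀ x y : α, r x y → toLinearExtension x < toLinearExtension y := fun _ _ h =>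
    toLinearExtension.monotone.strictMono_of_injective (fun _ _ h => h) h
  exact ⟨_, e.toEquiv, fun a b hab => e.lt_iff_lt.mp (hlin _ _ hab)⟩

section VertexCover

variable {t : ℕ} {H : SimpleGraph (Vtx t)}

theorem noIsolated_of_adj_xv_yv (hxy : ∀ a, H.Adj (xv a) (yv a)) : NoIsolated H
  | Sum.inl a => ⟨yv a, hxy a⟩
  | Sum.inr a => ⟨xv a, (hxy a).symm⟩

theorem heightN_of_adj_xv_yv (hxy : ∀ a, H.Adj (xv a) (yv a)) : HeightN H := by
  intro C hC
  have hsurj : Set.SurjOn (Sum.elim id id : Vtx t → Fin t) C Set.univ := by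
    intro a _
    rcases hC (hxy a) with h | h
    · exact ⟨xv a, h, rfl⟩
    · exact ⟨yv a, h, rfl⟩
  calc t = (Finset.univ : Finset (Fin t)).card := (Finset.card_fin t).symm
    _ ≤ C.card := Finset.card_le_card_of_surjOn _ (by simpa using hsurj)

theorem starCond_of_adj_xv_yv (hxy : ∀ a, H.Adj (xv a) (yv a))
    (hyy : ∀ a b, ¬ H.Adj (yv a) (yv b)) : StarCond H := by
  refine ⟨⟨?_, ?_⟩, ⟨?_, ?_⟩, hxy⟩
  · rintro (a | a) (b | b) hadj
    · exact Or.inl ⟨a, rfl⟩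
    · exact Or.inl ⟨a, rfl⟩
    · exact Or.inr ⟨b, rfl⟩
    · exact (hyy a b hadj).elim
  · intro D hD hsub
    refine hsub.antisymm ?_
    rintro _ ⟨a, rfl⟩
    refine (hD (hxy a)).resolve_right fun hy => ?_
    obtain ⟨b, hb⟩ := hsub hy
    exact Sum.inl_ne_inr hb
  · rintro _ ⟨a, rfl⟩ _ ⟨b, rfl⟩
    exact hyy a b
  · intro T hT hsub
    refine Set.Subset.antisymm ?_ hsub
    rintro (a | a) hv
    · exact (hT (xv a) hv (yv a) (hsub ⟨a, rfl⟩) (hxy a)).elim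
    · exact ⟨a, rfl⟩

end VertexCover

section Condensation

variable {n : ℕ} {G : SimpleGraph (Vtx n)}

theorem scMk_surjective : Function.Surjective (scMk G) :=
  Quotient.exists_rep

theorem scMk_eq_iff {i j : Fin n} :
    scMk G i = scMk G j ↔ ReflTransGen (dirEdge G) i j ∧ ReflTransGen (dirEdge G) j i :=
  Quotient.eq

instance : Finite (SC G) :=
  inferInstanceAs (Finite (Quotient _))

theorem condDir_asymm {a b : SC G} (hab : condDir G a b) (hba : condDir G b a) : False := by
  obtain ⟨hne, i, j, rfl, rfl, hij⟩ := hab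
  obtain ⟨-, j', i', hj', hi', hji⟩ := hba
  have hjj' := (scMk_eq_iff.mp hj'.symm).1
  have hi'i := (scMk_eq_iff.mp hi').1
  exact hne (scMk_eq_iff.mpr ⟨hij, (hjj'.trans hji).trans hi'i⟩)

instance : IsStrictOrder (SC G) (condDir G) where
  irrefl _ h := h.1 rfl
  trans a b c hab hbc := by
    refine ⟨fun hac => condDir_asymm hab (hac ▸ hbc), ?_⟩
    obtain ⟨-, i, j, hi, rfl, hij⟩ := hab
    obtain ⟨-, j', k, hj', hk, hjk⟩ := hbc
    exact ⟨i, k, hi, hk, (hij.trans (scMk_eq_iff.mp hj'.symm).1).trans hjk⟩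

theorem condUndir_symm {a b : SC G} (h : condUndir G a b) : condUndir G b a := by
  obtain ⟨hne, i, j, hi, hj, hij⟩ := h
  exact ⟨hne.symm, j, i, hj, hi, hij.symm⟩

theorem dirEdge_trans (hI : CondI G) {i j k : Fin n} (hik : i ≠ k) (hij : dirEdge G i j)
    (hjk : dirEdge G j k) : dirEdge G i k :=
  ⟨hik, (hI k j i hjk.1.symm hij.1.symm hik.symm (yv k) (Or.inr rfl) hjk.2.symm hij.2.symm).symm⟩

theorem eq_or_dirEdge_of_reflTransGen (hI : CondI G) {i j : Fin n} (h : ReflTransGen (dirEdge G) i j) :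
    i = j ∨ dirEdge G i j := by
  induction h with
  | refl => exact Or.inl rfl
  | @tail k l _ hkl ih =>
    rcases ih with rfl | hik
    · exact Or.inr hkl
    · by_cases hil : i = l
      · exact Or.inl hil
      · exact Or.inr (dirEdge_trans hI hil hik hkl)

theorem dirEdge_of_condDir (hI : CondI G) {i j : Fin n} (h : condDir G (scMk G i) (scMk G j)) :
    dirEdge G i j := by
  obtain ⟨hne, i', j', hi', hj', hij'⟩ := h
  have hii' := (scMk_eq_iff.mp hi'.symm).1
  have hj'j := (scMk_eq_iff.mp hj').1
  exact (eq_or_dirEdge_of_reflTransGen hI ((hii'.trans hij').trans hj'j)).resolve_left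
    fun hij => hne (congrArg (scMk G) hij)

end Condensation

section AcyclicReduction

variable {n t : ℕ} {G : SimpleGraph (Vtx n)} (e : Fin t ≃ SC G)

theorem hatG_adj_xv_yv {a b : Fin t} :
    (hatG G e).Adj (xv a) (yv b) ↔ a = b ∨ condDir G (e a) (e b) := by
  simp [hatG, hatRel, xv, yv]

theorem hatG_adj_xv_yv_of_ne {a b : Fin t} (hab : a ≠ b) :
    (hatG G e).Adj (xv a) (yv b) ↔ condDir G (e a) (e b) := by
  simp [hatG_adj_xv_yv, hab]

theorem hatG_adj_xv_xv {a b : Fin t} :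
    (hatG G e).Adj (xv a) (xv b) ↔ condUndir G (e a) (e b) := by
  rw [hatG, SimpleGraph.fromRel_adj]
  refine ⟨fun ⟨_, h⟩ => h.elim id condUndir_symm, fun h => ⟨?_, Or.inl h⟩⟩
  rintro ⟨⟩
  exact h.1 rfl

theorem not_hatG_adj_yv_yv (a b : Fin t) : ¬ (hatG G e).Adj (yv a) (yv b) := by
  simp [hatG, hatRel, yv]

theorem hatG_adj_xv_yv_self (a : Fin t) : (hatG G e).Adj (xv a) (yv a) :=
  (hatG_adj_xv_yv e).mpr (Or.inl rfl)

theorem starStarCond_hatG (hsort : ∀ a b : Fin t, condDir G (e a) (e b) → a < b) :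
    StarStarCond (hatG G e) := fun a b hab =>
  ((hatG_adj_xv_yv e).mp hab).elim le_of_eq fun h => (hsort a b h).le

theorem condI_hatG (hI : CondI G) : CondI (hatG G e) := by
  intro a b c hab hbc hac z hz hzb hbc'
  have hcb : condDir G (e c) (e b) := (hatG_adj_xv_yv_of_ne e hbc.symm).mp hbc'.symm
  rcases hz with rfl | rfl
  · obtain ⟨hne, i, j, hi, hj, hij⟩ := (hatG_adj_xv_xv e).mp hzb
    obtain ⟨k, hk⟩ := scMk_surjective (e c)
    have hkj : dirEdge G k j := dirEdge_of_condDir hI (hk ▸ hj ▸ hcb)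
    have hik : i ≠ k := by
      rintro rfl
      exact hac (e.injective (hi.symm.trans hk))
    refine (hatG_adj_xv_xv e).mpr ⟨fun h => hac (e.injective h), i, k, hi, hk, ?_⟩
    refine hI i j k (fun h => hne ?_) hkj.1.symm hik (xv i) (Or.inl rfl) hij hkj.2.symm
    rw [← hi, ← hj, h]
  · have hba : condDir G (e b) (e a) := (hatG_adj_xv_yv_of_ne e hab.symm).mp hzb.symm
    exact ((hatG_adj_xv_yv e).mpr (Or.inr (_root_.trans hcb hba))).symm

theorem condII_hatG (hI : CondI G) (hII : CondII G) : CondII (hatG G e) := by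
  intro a b hxy hxx
  obtain ⟨hne, i, j, hi, hj, hij⟩ := (hatG_adj_xv_xv e).mp hxx
  have hab : a ≠ b := fun h => hne (congrArg e h)
  have hd : condDir G (scMk G i) (scMk G j) := hi ▸ hj ▸ (hatG_adj_xv_yv_of_ne e hab).mp hxy
  exact hII i j (dirEdge_of_condDir hI hd).2 hij

end AcyclicReduction

theorem acyclicReduction_CM_general {n : ℕ} (G : SimpleGraph (Vtx n))
    (h1 : CondI G) (h2 : CondII G) :
    ∃ (t : ℕ) (e : Fin t ≃ SC G),
      (∀ a b : Fin t, condDir G (e a) (e b) → a < b) ∧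
      NoIsolated (hatG G e) ∧ HeightN (hatG G e) ∧
      StarCond (hatG G e) ∧ StarStarCond (hatG G e) ∧
      CondI (hatG G e) ∧ CondII (hatG G e) := by
  obtain ⟨t, e, hsort⟩ := exists_fin_equiv_lt_of_isStrictOrder (condDir G)
  have hxy := hatG_adj_xv_yv_self e
  exact ⟨t, e, hsort, noIsolated_of_adj_xv_yv hxy, heightN_of_adj_xv_yv hxy,
    starCond_of_adj_xv_yv hxy (not_hatG_adj_yv_yv e), starStarCond_hatG e hsort,
    condI_hatG e h1, condII_hatG e h1 h2⟩

/-- Lemma 4.6. Let `G` be a very well-covered graph with `2n` vertices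
satisfying (∗) (and the unmixedness conditions (i),(ii)). Then the acyclic reduction `Ĝ` is
a Cohen-Macaulay very well-covered graph: for some labeling of the `t` strong components in
which directed edges of the condensation go from smaller to larger indices, `Ĝ` has `2t`
non-isolated vertices, minimum vertex cover size `t`, and satisfies (∗), (∗∗), (i), (ii). -/
theorem acyclicReduction_CM {n : ℕ} (G : SimpleGraph (Vtx n))
    (hiso : NoIsolated G) (hht : HeightN G) (hstar : StarCond G)
    (h1 : CondI G) (h2 : CondII G) :
    ∃ (t : ℕ) (e : Fin t ≃ SC G),
      (∀ a b : Fin t, condDir G (e a) (e b) → a < b) ∧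
      NoIsolated (hatG G e) ∧ HeightN (hatG G e) ∧
      StarCond (hatG G e) ∧ StarStarCond (hatG G e) ∧
      CondI (hatG G e) ∧ CondII (hatG G e) :=
  acyclicReduction_CM_general G h1 h2
end

section
/- Let G be a Cohen-Macaulay very well-covered graph with 2n vertices satisfying (∗) and (∗∗). For any set B of pairwise 3-disjoint edges of G, the set A = {i : x_i y_j ∈ B for some j} ∪ {i : x_i x_k ∈ B, i < k} is an antichain in 𝔡_G of size |B| and Ω_A contains no undirected edge of 𝔡_G. Consequently a(G) ≤ max{|A| : A antichain in 𝔡_G with Ω_A containing no undirected edge of 𝔡_G}. -/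
open Relation

/-- The index assigned to an edge of `G`: for `x_i y_j` the index `i`, for `x_i x_k` the
smaller of `i, k`. -/
def firstIdx {n : ℕ} : Vtx n × Vtx n → Fin n
  | (Sum.inl i, Sum.inl k) => min i k
  | (Sum.inl i, Sum.inr _) => i
  | (Sum.inr _, Sum.inl i) => i
  | (Sum.inr i, Sum.inr _) => i

/-! Conditions (i), (ii) and (∗∗) make every directed edge `i → j` of `𝔡_G` shrink
neighbourhoods: `N(x_j) ⊆ N(x_i)`, hence the same holds along directed paths. Every edge of `B`
has `x_{firstIdx e}` as an endpoint, so a directed path between two indices of `A`, or an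
undirected edge inside `Ω_A`, yields an edge of `G` between two distinct members of `B`,
which 3-disjointness forbids. -/

theorem ThreeDisjoint.ne_and_not_adj {V : Type*} {G : SimpleGraph V} {a b c d u v : V}
    (h : ThreeDisjoint G a b c d) (hu : u = a ∨ u = b) (hv : v = c ∨ v = d) :
    u ≠ v ∧ ¬ G.Adj u v := by
  obtain ⟨-, -, hac, had, hbc, hbd, nac, nad, nbc, nbd⟩ := h
  rcases hu with rfl | rfl <;> rcases hv with rfl | rfl <;> exact ⟨‹_›, ‹_›⟩

theorem Is3DisjointFamily.ne_and_not_adj {V : Type*} {G : SimpleGraph V}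
    {B : Finset (V × V)} (hB : Is3DisjointFamily G B) {e f : V × V} (he : e ∈ B) (hf : f ∈ B)
    (hef : e ≠ f) {u v : V} (hu : u = e.1 ∨ u = e.2) (hv : v = f.1 ∨ v = f.2) :
    u ≠ v ∧ ¬ G.Adj u v :=
  (hB.2 e he f hf hef).ne_and_not_adj hu hv

section SemidirectedGraph

variable {n : ℕ} {G : SimpleGraph (Vtx n)}

theorem xv_firstIdx_eq_or (hY : IsIndep G (Set.range yv)) {e : Vtx n × Vtx n}
    (he : G.Adj e.1 e.2) : xv (firstIdx e) = e.1 ∨ xv (firstIdx e) = e.2 := by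
  obtain ⟨a | a, b | b⟩ := e
  · rcases le_total a b with h | h
    · simp [firstIdx, xv, min_eq_left h]
    · simp [firstIdx, xv, min_eq_right h]
  · exact Or.inl rfl
  · exact Or.inr rfl
  · exact absurd he (hY _ ⟨a, rfl⟩ _ ⟨b, rfl⟩)

theorem adj_of_dirEdge (hss : StarStarCond G) (h1 : CondI G) (h2 : CondII G) {i j : Fin n}
    (hij : dirEdge G i j) {w : Vtx n} (hjw : G.Adj (xv j) w) : G.Adj (xv i) w := by
  obtain ⟨hne, hxy⟩ := hij
  rcases w with k | d
  · have hkj : k ≠ j := fun h => G.irrefl (h ▸ hjw)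
    have hki : k ≠ i := by
      rintro rfl
      exact h2 k j hxy hjw.symm
    exact (h1 k j i hkj hne.symm hki (xv k) (by simp) hjw.symm hxy.symm).symm
  · by_cases hdj : d = j
    · exact hdj ▸ hxy
    have hdi : d ≠ i := (lt_of_lt_of_le (lt_of_le_of_ne (hss i j hxy) hne) (hss j d hjw)).ne'
    exact (h1 d j i hdj hne.symm hdi (yv d) (by simp) hjw.symm hxy.symm).symm

theorem adj_of_reflTransGen (hss : StarStarCond G) (h1 : CondI G) (h2 : CondII G)
    {i j : Fin n} (hij : ReflTransGen (dirEdge G) i j) {w : Vtx n} (hjw : G.Adj (xv j) w) :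
    G.Adj (xv i) w := by
  induction hij using ReflTransGen.head_induction_on with
  | refl => exact hjw
  | head hstep _ ih => exact adj_of_dirEdge hss h1 h2 hstep ih

variable {B : Finset (Vtx n × Vtx n)}

theorem card_image_firstIdx (hY : IsIndep G (Set.range yv)) (hB : Is3DisjointFamily G B) :
    (B.image firstIdx).card = B.card := by
  refine Finset.card_image_of_injOn fun e he f hf hef => ?_
  by_contra hne
  exact (hB.ne_and_not_adj he hf hne (xv_firstIdx_eq_or hY (hB.1 e he))
    (hef ▸ xv_firstIdx_eq_or hY (hB.1 f hf))).1 rfl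

theorem antichainD_image_firstIdx (hY : IsIndep G (Set.range yv)) (hss : StarStarCond G)
    (h1 : CondI G) (h2 : CondII G) (hB : Is3DisjointFamily G B) :
    AntichainD G (B.image firstIdx) := by
  simp only [AntichainD, Finset.forall_mem_image]
  intro e he f hf hne hpath
  have hef : e ≠ f := fun h => hne (h ▸ rfl)
  obtain ⟨w, hw, hjw⟩ : ∃ w, (w = f.1 ∨ w = f.2) ∧ G.Adj (xv (firstIdx f)) w := by
    rcases xv_firstIdx_eq_or hY (hB.1 f hf) with h | h
    · exact ⟨f.2, Or.inr rfl, h ▸ hB.1 f hf⟩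
    · exact ⟨f.1, Or.inl rfl, h ▸ (hB.1 f hf).symm⟩
  exact (hB.ne_and_not_adj he hf hef (xv_firstIdx_eq_or hY (hB.1 e he)) hw).2
    (adj_of_reflTransGen hss h1 h2 hpath.to_reflTransGen hjw)

theorem not_undirEdge_of_mem_omega_image_firstIdx (hY : IsIndep G (Set.range yv))
    (hss : StarStarCond G) (h1 : CondI G) (h2 : CondII G) (hB : Is3DisjointFamily G B) :
    ∀ i ∈ Omega G (B.image firstIdx), ∀ j ∈ Omega G (B.image firstIdx), ¬ undirEdge G i j := by
  rintro i ⟨_, ha, hai⟩ j ⟨_, hb, hbj⟩ hij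
  obtain ⟨e, he, rfl⟩ := Finset.mem_image.1 ha
  obtain ⟨f, hf, rfl⟩ := Finset.mem_image.1 hb
  have hej : G.Adj (xv (firstIdx e)) (xv j) := adj_of_reflTransGen hss h1 h2 hai hij
  have hfe : G.Adj (xv (firstIdx f)) (xv (firstIdx e)) :=
    adj_of_reflTransGen hss h1 h2 hbj hej.symm
  by_cases hef : e = f
  · exact G.irrefl (hef ▸ hfe)
  · exact (hB.ne_and_not_adj he hf hef (xv_firstIdx_eq_or hY (hB.1 e he))
      (xv_firstIdx_eq_or hY (hB.1 f hf))).2 hfe.symm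

end SemidirectedGraph

theorem threeDisjoint_gives_antichain_general {n : ℕ} (G : SimpleGraph (Vtx n))
    (hstar : StarCond G) (hss : StarStarCond G) (h1 : CondI G) (h2 : CondII G)
    (B : Finset (Vtx n × Vtx n)) (hB : Is3DisjointFamily G B) :
    (B.image firstIdx).card = B.card ∧
    AntichainD G (B.image firstIdx) ∧
    (∀ i ∈ Omega G (B.image firstIdx), ∀ j ∈ Omega G (B.image firstIdx),
      ¬ undirEdge G i j) ∧
    aNum G ≤ sSup {k | ∃ A : Finset (Fin n), AntichainD G A ∧
      (∀ i ∈ Omega G A, ∀ j ∈ Omega G A, ¬ undirEdge G i j) ∧ A.card = k} := by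
  have hY : IsIndep G (Set.range yv) := hstar.2.1.1
  refine ⟨card_image_firstIdx hY hB, antichainD_image_firstIdx hY hss h1 h2 hB,
    not_undirEdge_of_mem_omega_image_firstIdx hY hss h1 h2 hB, ?_⟩
  apply csSup_le_csSup
  · refine ⟨n, ?_⟩
    rintro k ⟨A, -, -, rfl⟩
    simpa using A.card_le_univ
  · exact ⟨0, ∅, ⟨by simp, by simp⟩, rfl⟩
  · rintro k ⟨B', hB', rfl⟩
    exact ⟨B'.image firstIdx, antichainD_image_firstIdx hY hss h1 h2 hB',
      not_undirEdge_of_mem_omega_image_firstIdx hY hss h1 h2 hB', card_image_firstIdx hY hB'⟩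

/-- last part of Theorem 4.10. Let `G` be a Cohen-Macaulay very
well-covered graph with `2n` vertices satisfying (∗) and (∗∗). For any set `B` of pairwise
3-disjoint edges of `G`, the index set `A = {i : x_i y_j ∈ B} ∪ {i : x_i x_k ∈ B, i < k}`
is an antichain of `𝔡_G` of size `|B|` and `Ω_A` contains no undirected edge of `𝔡_G`.
Consequently `a(G) ≤ max{|A| : A antichain, Ω_A without undirected edges}`. -/
theorem threeDisjoint_gives_antichain {n : ℕ} (G : SimpleGraph (Vtx n))
    (hiso : NoIsolated G) (hht : HeightN G) (hstar : StarCond G)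
    (hss : StarStarCond G) (h1 : CondI G) (h2 : CondII G)
    (B : Finset (Vtx n × Vtx n)) (hB : Is3DisjointFamily G B) :
    (B.image firstIdx).card = B.card ∧
    AntichainD G (B.image firstIdx) ∧
    (∀ i ∈ Omega G (B.image firstIdx), ∀ j ∈ Omega G (B.image firstIdx),
      ¬ undirEdge G i j) ∧
    aNum G ≤ sSup {k | ∃ A : Finset (Fin n), AntichainD G A ∧
      (∀ i ∈ Omega G A, ∀ j ∈ Omega G A, ¬ undirEdge G i j) ∧ A.card = k} :=
  threeDisjoint_gives_antichain_general G hstar hss h1 h2 B hB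
end

section
/- Let G be a very well-covered graph with 2n vertices. Then the set {x_i : i ∉ Ω_A} ∪ {y_i : i ∈ Ω_A} is a minimal vertex cover of G of size n, for every antichain A of the condensation 𝔡̂_G such that Ω_A contains no undirected edge of 𝔡_G. -/
open Relation

/-!
`Ω_A` is upward closed in `𝔡̂_G`, hence closed under the directed edges `i → j` of `𝔡_G`; so
the `y`-half of the set covers every edge `x_i y_j` with `i ∈ Ω_A`, while the `x`-half covers the
edges `x_i x_j` because `Ω_A` contains no undirected edge (and `Y` is independent). The set has
exactly `n` elements, and since no vertex cover of `G` has fewer than `n`, it is minimal.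
-/

theorem isMinVC_of_forall_ncard_le {V : Type*} [Finite V] {G : SimpleGraph V} {C : Set V}
    (hC : IsVC G C) (hmin : ∀ D : Set V, IsVC G D → C.ncard ≤ D.ncard) : IsMinVC G C :=
  ⟨hC, fun D hD hDC => Set.eq_of_subset_of_ncard_le hDC (hmin D hD) (Set.toFinite C)⟩

theorem HeightN.le_ncard {n : ℕ} {G : SimpleGraph (Vtx n)} (hht : HeightN G) {D : Set (Vtx n)}
    (hD : IsVC G D) : n ≤ D.ncard := by
  have hDfin : D.Finite := Set.toFinite D
  rw [Set.ncard_eq_toFinset_card D hDfin]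
  exact hht hDfin.toFinset (by rwa [Set.Finite.coe_toFinset])

section coverOf

variable {n : ℕ} {Ω : Set (Fin n)}

@[simp]
theorem xv_mem_coverOf {i : Fin n} : xv i ∈ coverOf Ω ↔ i ∉ Ω := by
  simp [coverOf, xv, yv]

@[simp]
theorem yv_mem_coverOf {i : Fin n} : yv i ∈ coverOf Ω ↔ i ∈ Ω := by
  simp [coverOf, xv, yv]

theorem coverOf_eq_range [DecidablePred (· ∈ Ω)] :
    coverOf Ω = Set.range fun i => if i ∈ Ω then yv i else xv i := by
  ext v
  constructor
  · rintro ⟨i, ⟨rfl, hi⟩ | ⟨rfl, hi⟩⟩ <;> exact ⟨i, by simp [hi]⟩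
  · rintro ⟨i, rfl⟩
    by_cases hi : i ∈ Ω <;> simp [hi]

theorem ncard_coverOf : (coverOf Ω).ncard = n := by
  classical
  have hinj : Function.Injective fun i => if i ∈ Ω then yv i else xv i := by
    intro i j hij
    by_cases hi : i ∈ Ω <;> by_cases hj : j ∈ Ω <;> simp [hi, hj, xv, yv] at hij <;> exact hij
  rw [coverOf_eq_range, ← Set.image_univ, Set.ncard_image_of_injective _ hinj,
    Set.ncard_univ, Nat.card_eq_fintype_card, Fintype.card_fin]

theorem isVC_coverOf {G : SimpleGraph (Vtx n)} (hY : IsIndep G (Set.range yv))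
    (hclosed : ∀ i j, i ∈ Ω → G.Adj (xv i) (yv j) → j ∈ Ω)
    (hund : ∀ i ∈ Ω, ∀ j ∈ Ω, ¬ undirEdge G i j) : IsVC G (coverOf Ω) := by
  rintro (i | i) (j | j) hadj
  · change G.Adj (xv i) (xv j) at hadj
    by_cases hi : i ∈ Ω
    · by_cases hj : j ∈ Ω
      · exact absurd hadj (hund i hi j hj)
      · exact Or.inr (xv_mem_coverOf.2 hj)
    · exact Or.inl (xv_mem_coverOf.2 hi)
  · change G.Adj (xv i) (yv j) at hadj
    by_cases hi : i ∈ Ω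
    · exact Or.inr (yv_mem_coverOf.2 (hclosed i j hi hadj))
    · exact Or.inl (xv_mem_coverOf.2 hi)
  · change G.Adj (yv i) (xv j) at hadj
    by_cases hj : j ∈ Ω
    · exact Or.inl (yv_mem_coverOf.2 (hclosed j i hj hadj.symm))
    · exact Or.inr (xv_mem_coverOf.2 hj)
  · exact absurd hadj (hY (yv i) ⟨i, rfl⟩ (yv j) ⟨j, rfl⟩)

end coverOf

theorem mem_omegaC_of_adj {n : ℕ} {G : SimpleGraph (Vtx n)} {A' : Finset (SC G)} {i j : Fin n}
    (hi : i ∈ OmegaC G A') (hadj : G.Adj (xv i) (yv j)) : j ∈ OmegaC G A' := by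
  obtain ⟨a, ha, hai⟩ := hi
  refine ⟨a, ha, ?_⟩
  by_cases hsc : scMk G i = scMk G j
  · exact hsc ▸ hai
  · have hij : i ≠ j := fun h => hsc (congrArg (scMk G) h)
    exact hai.tail ⟨hsc, i, j, rfl, rfl, .single ⟨hij, hadj⟩⟩

theorem antichain_gives_minimal_cover_general {n : ℕ} (G : SimpleGraph (Vtx n))
    (hht : HeightN G) (hstar : StarCond G)
    (A' : Finset (SC G))
    (hΩ : ∀ i ∈ OmegaC G A', ∀ j ∈ OmegaC G A', ¬ undirEdge G i j) :
    IsMinVC G (coverOf (OmegaC G A')) ∧ (coverOf (OmegaC G A')).ncard = n := by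
  have hVC : IsVC G (coverOf (OmegaC G A')) :=
    isVC_coverOf hstar.2.1.1 (fun _ _ hi hadj => mem_omegaC_of_adj hi hadj) hΩ
  refine ⟨isMinVC_of_forall_ncard_le hVC fun D hD => ?_, ncard_coverOf⟩
  exact ncard_coverOf.trans_le (hht.le_ncard hD)

/-- Let `G` be a very well-covered graph with `2n` vertices (satisfying
(∗) and the unmixedness conditions (i),(ii)). For every antichain `A` of the condensation
`𝔡̂_G` such that `Ω_A` contains no undirected edge of `𝔡_G`, the set
`{x_i : i ∉ Ω_A} ∪ {y_i : i ∈ Ω_A}` is a minimal vertex cover of `G` of size `n`. -/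
theorem antichain_gives_minimal_cover {n : ℕ} (G : SimpleGraph (Vtx n))
    (hiso : NoIsolated G) (hht : HeightN G) (hstar : StarCond G)
    (h1 : CondI G) (h2 : CondII G)
    (A' : Finset (SC G)) (hA : AntichainC G A')
    (hΩ : ∀ i ∈ OmegaC G A', ∀ j ∈ OmegaC G A', ¬ undirEdge G i j) :
    IsMinVC G (coverOf (OmegaC G A')) ∧ (coverOf (OmegaC G A')).ncard = n :=
  antichain_gives_minimal_cover_general G hht hstar A' hΩ
end

section
/- Let G be a graph with 2n non-isolated vertices satisfying (∗), (∗∗) and unmixedness conditions (i),(ii), with deg(y_1)=1. Then the induced subgraph G \ {x_1, y_1}, restricted to its non-isolated vertices, again has minimum vertex cover size equal to half its number of vertices and satisfies conditions (∗), (∗∗), (i), (ii) (with respect to the inherited labeling x_2,...,x_n, y_2,...,y_n). -/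
open Relation

/-! Deleting `x₁, y₁` relabels the remaining vertices along `Sum.map Fin.succ Fin.succ`, and
(∗∗), (i), (ii) are universal statements about edges, so they pass to the induced subgraph.
Condition (∗) follows from `Y` being independent and every `x_i y_i` being an edge, and both
facts are inherited. For the height, a vertex
cover `C` of `G \ {x₁, y₁}` together with `x₁` covers `G`, because `x₁` is the only neighbour
of `y₁`; hence `|C| + 1 ≥ n + 1`. -/

open Function Set

lemma IsIndep.comap_of_mapsTo {V W : Type*} {G : SimpleGraph W} {S : Set W} {T : Set V}
    {f : V → W} (hS : IsIndep G S) (hf : MapsTo f T S) : IsIndep (G.comap f) T :=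
  fun _ hu _ hv => hS _ (hf hu) _ (hf hv)

section Relabel

variable {m n : ℕ} {G : SimpleGraph (Vtx n)} {e : Fin m → Fin n}

lemma mapsTo_range_yv_sumMap : MapsTo (Sum.map e e) (range yv) (range yv) := by
  rintro _ ⟨i, rfl⟩
  exact ⟨e i, rfl⟩

lemma StarStarCond.comap_sumMap (h : StarStarCond G) (he : ∀ i j, e i ≤ e j → i ≤ j) :
    StarStarCond (G.comap (Sum.map e e)) :=
  fun i j hij => he i j (h (e i) (e j) hij)

lemma CondI.comap_sumMap (h : CondI G) (he : Injective e) :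
    CondI (G.comap (Sum.map e e)) := by
  intro i j k hij hjk hik z hz hzj hjk'
  have hz' : Sum.map e e z ∈ ({xv (e i), yv (e i)} : Set (Vtx n)) := by
    rcases hz with rfl | rfl
    exacts [Or.inl rfl, Or.inr rfl]
  exact h (e i) (e j) (e k) (he.ne hij) (he.ne hjk) (he.ne hik) _ hz' hzj hjk'

lemma CondII.comap_sumMap (h : CondII G) : CondII (G.comap (Sum.map e e)) :=
  fun i j => h (e i) (e j)

end Relabel

section Matching

variable {n : ℕ} {G : SimpleGraph (Vtx n)}

lemma noIsolated_of_adj_xv_yv_s19 (hxy : ∀ i, G.Adj (xv i) (yv i)) : NoIsolated G := by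
  rintro (i | i)
  exacts [⟨yv i, hxy i⟩, ⟨xv i, (hxy i).symm⟩]

lemma isVC_range_xv_of_isIndep (hY : IsIndep G (range yv)) : IsVC G (range xv) := by
  rintro (i | i) (j | j) h
  · exact Or.inl ⟨i, rfl⟩
  · exact Or.inl ⟨i, rfl⟩
  · exact Or.inr ⟨j, rfl⟩
  · exact (hY _ ⟨i, rfl⟩ _ ⟨j, rfl⟩ h).elim

lemma isMinVC_range_xv (hY : IsIndep G (range yv)) (hxy : ∀ i, G.Adj (xv i) (yv i)) :
    IsMinVC G (range xv) := by
  refine ⟨isVC_range_xv_of_isIndep hY, fun D hD hDX => hDX.antisymm ?_⟩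
  rintro _ ⟨i, rfl⟩
  rcases hD (hxy i) with hx | hy
  · exact hx
  · obtain ⟨j, hj⟩ := hDX hy
    exact Sum.inl_ne_inr hj |>.elim

lemma isMaxIndep_range_yv (hY : IsIndep G (range yv)) (hxy : ∀ i, G.Adj (xv i) (yv i)) :
    IsMaxIndep G (range yv) := by
  refine ⟨hY, fun T hT hYT => (hYT.antisymm ?_).symm⟩
  rintro (i | i) hi
  · exact (hT _ hi _ (hYT ⟨i, rfl⟩) (hxy i)).elim
  · exact ⟨i, rfl⟩

lemma starCond_of_isIndep (hY : IsIndep G (range yv)) (hxy : ∀ i, G.Adj (xv i) (yv i)) :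
    StarCond G :=
  ⟨isMinVC_range_xv hY hxy, isMaxIndep_range_yv hY hxy, hxy⟩

end Matching

section DeleteFirst

variable {n : ℕ} {G : SimpleGraph (Vtx (n + 1))}

lemma vtx_eq_xv_zero_or_eq_yv_zero_or_mem_range (v : Vtx (n + 1)) :
    v = xv 0 ∨ v = yv 0 ∨ v ∈ range (Sum.map Fin.succ Fin.succ) := by
  rcases v with i | i <;> cases i using Fin.cases
  · exact Or.inl rfl
  · exact Or.inr <| Or.inr ⟨xv _, rfl⟩
  · exact Or.inr <| Or.inl rfl
  · exact Or.inr <| Or.inr ⟨yv _, rfl⟩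

lemma IsVC.insert_xv_zero_image (hdeg : ∀ v, G.Adj (yv 0) v → v = xv 0) {C : Set (Vtx n)}
    (hC : IsVC (G.comap (Sum.map Fin.succ Fin.succ)) C) :
    IsVC G (insert (xv 0) (Sum.map Fin.succ Fin.succ '' C)) := by
  intro u v huv
  rcases vtx_eq_xv_zero_or_eq_yv_zero_or_mem_range u with rfl | rfl | ⟨u, rfl⟩
  · exact Or.inl (mem_insert _ _)
  · exact Or.inr (hdeg v huv ▸ mem_insert _ _)
  rcases vtx_eq_xv_zero_or_eq_yv_zero_or_mem_range v with rfl | rfl | ⟨v, rfl⟩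
  · exact Or.inr (mem_insert _ _)
  · exact Or.inl (hdeg _ huv.symm ▸ mem_insert _ _)
  rcases hC huv with hu | hv
  exacts [Or.inl (mem_insert_of_mem _ (mem_image_of_mem _ hu)),
    Or.inr (mem_insert_of_mem _ (mem_image_of_mem _ hv))]

lemma HeightN.comap_succ (hG : HeightN G) (hdeg : ∀ v, G.Adj (yv 0) v → v = xv 0) :
    HeightN (G.comap (Sum.map Fin.succ Fin.succ)) := by
  classical
  intro C hC
  let f : Vtx n ↪ Vtx (n + 1) := (Fin.succEmb n).sumMap (Fin.succEmb n)
  have hcover : IsVC G ↑(insert (xv 0) (C.map f)) := by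
    rw [Finset.coe_insert, Finset.coe_map]
    exact hC.insert_xv_zero_image hdeg
  have := calc
    n + 1 ≤ (insert (xv 0) (C.map f)).card := hG _ hcover
    _ ≤ (C.map f).card + 1 := Finset.card_insert_le _ _
    _ = C.card + 1 := by rw [Finset.card_map]
  omega

end DeleteFirst

theorem delete_x1y1_inductive_step_general {n : ℕ} (G : SimpleGraph (Vtx (n + 1)))
    (hht : HeightN G) (hstar : StarCond G)
    (hss : StarStarCond G) (h1 : CondI G) (h2 : CondII G)
    (hdeg : ∀ v, G.Adj (yv (0 : Fin (n + 1))) v → v = xv (0 : Fin (n + 1))) :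
    NoIsolated (G.comap (Sum.map Fin.succ Fin.succ)) ∧
    HeightN (G.comap (Sum.map Fin.succ Fin.succ)) ∧
    StarCond (G.comap (Sum.map Fin.succ Fin.succ)) ∧
    StarStarCond (G.comap (Sum.map Fin.succ Fin.succ)) ∧
    CondI (G.comap (Sum.map Fin.succ Fin.succ)) ∧
    CondII (G.comap (Sum.map Fin.succ Fin.succ)) := by
  have hY : IsIndep (G.comap (Sum.map Fin.succ Fin.succ)) (range yv) :=
    hstar.2.1.1.comap_of_mapsTo mapsTo_range_yv_sumMap
  have hxy : ∀ i : Fin n, (G.comap (Sum.map Fin.succ Fin.succ)).Adj (xv i) (yv i) :=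
    fun i => hstar.2.2 i.succ
  exact ⟨noIsolated_of_adj_xv_yv_s19 hxy, hht.comap_succ hdeg, starCond_of_isIndep hY hxy,
    hss.comap_sumMap fun _ _ => Fin.succ_le_succ_iff.mp, h1.comap_sumMap (Fin.succ_injective n),
    h2.comap_sumMap⟩

/-- inductive step of Theorem 3.1. Let `G` be a graph on
`{x_1,…,x_{n+1},y_1,…,y_{n+1}}` with no isolated vertices, minimum vertex cover size
`n+1`, satisfying (∗), (∗∗), (i), (ii), and `deg(y_1) = 1`. Then the induced subgraph
`G \ {x_1, y_1}` (with the inherited labeling `x_2,…,x_{n+1}, y_2,…,y_{n+1}`) has no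
isolated vertices, minimum vertex cover size `n` (half its number of vertices), and
satisfies (∗), (∗∗), (i), (ii). -/
theorem delete_x1y1_inductive_step {n : ℕ} (G : SimpleGraph (Vtx (n + 1)))
    (hiso : NoIsolated G) (hht : HeightN G) (hstar : StarCond G)
    (hss : StarStarCond G) (h1 : CondI G) (h2 : CondII G)
    (hdeg : ∀ v, G.Adj (yv (0 : Fin (n + 1))) v → v = xv (0 : Fin (n + 1))) :
    NoIsolated (G.comap (Sum.map Fin.succ Fin.succ)) ∧
    HeightN (G.comap (Sum.map Fin.succ Fin.succ)) ∧
    StarCond (G.comap (Sum.map Fin.succ Fin.succ)) ∧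
    StarStarCond (G.comap (Sum.map Fin.succ Fin.succ)) ∧
    CondI (G.comap (Sum.map Fin.succ Fin.succ)) ∧
    CondII (G.comap (Sum.map Fin.succ Fin.succ)) :=
  delete_x1y1_inductive_step_general G hht hstar hss h1 h2 hdeg
end
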